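/- arXiv:2601.05026 — 11 statements merged into one kernel-verified Lean document; each statement's English description precedes it below -/
import Mathlib

section
/- Let n > 0 and let I ⊆ ℕ^n be a monomial ideal. The increasing chain of quotients I/0 ⊆ I/1 ⊆ I/2 ⊆ ⋯ eventually stabilises: there exists E ∈ ℕ such that I/e = I/E for all e ≥ E. Moreover, if I is nonempty then the stabilised value I/E is nonempty. -/
open Pointwise

/-- A monomial ideal in `ℕ^n`, identified with a set of exponent vectors `I`
such that `I + ℕ^n = I`. -/
def IsMonomialIdeal {n : ℕ} (I : Set (Fin n → ℕ)) : Prop :=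
  I + (Set.univ : Set (Fin n → ℕ)) = I

/-- The `e`-th quotient `I/e = {α ∈ ℕ^{n-1} : e·α ∈ I}` of a monomial ideal
`I ⊆ ℕ^n`, where `e·α` is the concatenation. -/
def quotIdeal {n : ℕ} (I : Set (Fin (n + 1) → ℕ)) (e : ℕ) : Set (Fin n → ℕ) :=
  {α | Fin.cons e α ∈ I}

/-- `n`-trees: the unique `0`-tree is the leaf `⊥`; an `(n+1)`-tree is a partial
function from `ℕ` to `n`-trees with finite nonempty domain. -/
inductive NTree : ℕ → Type where
  | leaf : NTree 0
  | node {n : ℕ} (dom : Finset ℕ) (hdom : dom.Nonempty)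
      (child : (e : ℕ) → e ∈ dom → NTree n) : NTree (n + 1)

namespace NTree

/-- The domain of an `(n+1)`-tree. -/
def dom : ∀ {n : ℕ}, NTree (n + 1) → Finset ℕ
  | _, node d _ _ => d

theorem dom_nonempty : ∀ {n : ℕ} (t : NTree (n + 1)), t.dom.Nonempty
  | _, node _ h _ => h

/-- The child `t(e)` of an `(n+1)`-tree at `e ∈ dom t`. -/
def child : ∀ {n : ℕ} (t : NTree (n + 1)) (e : ℕ), e ∈ t.dom → NTree n
  | _, node _ _ c, e, he => c e he

/-- The monomial ideal `𝕀(t)` represented by an `n`-tree `t`. -/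
def idealSet : ∀ {n : ℕ}, NTree n → Set (Fin n → ℕ)
  | 0, leaf => Set.univ
  | n + 1, node d _ c =>
      {γ | ∃ (e : ℕ) (he : e ∈ d) (f : ℕ) (β : Fin n → ℕ),
        e ≤ f ∧ β ∈ idealSet (c e he) ∧ γ = Fin.cons f β}

/-- An `n`-tree is *ideal* if all its children are ideal and the ideals of the
children are strictly increasing along the domain. -/
def IsIdealTree : ∀ {n : ℕ}, NTree n → Prop
  | 0, leaf => True
  | _ + 1, node d _ c =>
      (∀ (e : ℕ) (he : e ∈ d), IsIdealTree (c e he)) ∧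
      ∀ (e f : ℕ) (he : e ∈ d) (hf : f ∈ d), e < f →
        idealSet (c e he) ⊂ idealSet (c f hf)

/-- The set of subtrees of `t` at depth `k`, as elements of `Σ m, NTree m`. -/
def subAt : ∀ {n : ℕ}, NTree n → ℕ → Set ((m : ℕ) × NTree m)
  | n, t, 0 => {⟨n, t⟩}
  | 0, leaf, _ + 1 => ∅
  | _ + 1, node d _ c, k + 1 => ⋃ (e : ℕ) (he : e ∈ d), subAt (c e he) k

/-- All subtrees of `t` (at any depth). -/
def allSub {n : ℕ} (t : NTree n) : Set ((m : ℕ) × NTree m) :=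
  ⋃ k : ℕ, subAt t k

/-- The width of an `n`-tree: the maximum over `0 ≤ k ≤ n` of the number of
pairwise distinct subtrees at depth `k`. -/
noncomputable def width {n : ℕ} (t : NTree n) : ℕ :=
  (Finset.range (n + 1)).sup fun k => (subAt t k).ncard

/-- The number of children of a tree: `|dom s|` for trees of positive height,
`0` for the leaf. -/
def degOf : (m : ℕ) × NTree m → ℕ
  | ⟨0, _⟩ => 0
  | ⟨_ + 1, s⟩ => s.dom.card

/-- The branching degree of an `n`-tree: the maximum of `|dom s|` over all
subtrees `s` of positive height. -/
noncomputable def branchingDegree {n : ℕ} (t : NTree n) : ℕ :=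
  sSup {d | ∃ p ∈ allSub t, p.1 ≠ 0 ∧ d = degOf p}

/-- The size (number of edges) of the monomial divisibility diagram of `t`:
the sum of `|dom s|` over all pairwise distinct subtrees `s` of `t` of
positive height. -/
noncomputable def mddSize {n : ℕ} (t : NTree n) : ℕ :=
  ∑ᶠ p ∈ {p ∈ allSub t | p.1 ≠ 0}, degOf p

/-- The singleton tree of `α`, representing the ideal `⟨α⟩ = α + ℕ^n`. -/
def singletonTree : ∀ {n : ℕ}, (Fin n → ℕ) → NTree n
  | 0, _ => leaf
  | _ + 1, α =>
      node {α 0} (Finset.singleton_nonempty _) fun _ _ => singletonTree (Fin.tail α)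

end NTree

/-- The vector `(α_{k+1}, …, α_n)` of the last `n - k` coordinates of `α`. -/
def tailFrom {n : ℕ} (α : Fin n → ℕ) (k : ℕ) (hk : k ≤ n) : Fin (n - k) → ℕ :=
  fun i => α (Fin.cast (Nat.sub_add_cancel hk) (i.addNat k))

section Aux

private theorem upward {n : ℕ} {I : Set (Fin n → ℕ)} (hI : IsMonomialIdeal I)
    {β γ : Fin n → ℕ} (hβ : β ∈ I) (h : ∀ i, β i ≤ γ i) : γ ∈ I := by
  have : γ ∈ I + (Set.univ : Set (Fin n → ℕ)) := by
    refine Set.mem_add.mpr ⟨β, hβ, fun i => γ i - β i, trivial, ?_⟩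
    funext i
    simp only [Pi.add_apply]
    have := h i
    omega
  rwa [hI] at this

private theorem quot_mono {n : ℕ} {I : Set (Fin (n + 1) → ℕ)} (hI : IsMonomialIdeal I)
    {e f : ℕ} (hef : e ≤ f) : quotIdeal I e ⊆ quotIdeal I f := by
  intro α hα
  refine upward hI hα fun i => ?_
  refine Fin.cases ?_ ?_ i <;> simp [hef]

private theorem quot_upward {n : ℕ} {I : Set (Fin (n + 1) → ℕ)} (hI : IsMonomialIdeal I)
    {e : ℕ} {α β : Fin n → ℕ} (hα : α ∈ quotIdeal I e) (h : ∀ i, α i ≤ β i) :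
    β ∈ quotIdeal I e := by
  refine upward hI hα fun i => ?_
  refine Fin.cases ?_ ?_ i <;> simp [h]

end Aux

/-- the increasing chain of quotients `I/0 ⊆ I/1 ⊆ ⋯` eventually
stabilises, and if `I` is nonempty then the stabilised value is nonempty. -/
theorem statement2 {n : ℕ} (I : Set (Fin (n + 1) → ℕ)) (hI : IsMonomialIdeal I) :
    ∃ E : ℕ, (∀ e : ℕ, E ≤ e → quotIdeal I e = quotIdeal I E) ∧
      (I.Nonempty → (quotIdeal I E).Nonempty) := by
  have key : ∃ E : ℕ, ∀ e : ℕ, E ≤ e → quotIdeal I e = quotIdeal I E := by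
    by_contra hcon
    push_neg at hcon
    choose f hf1 hf2 using hcon
    -- build strictly increasing indices with strictly increasing quotients
    let E : ℕ → ℕ := fun k => Nat.rec 0 (fun _ Ek => f Ek) k
    have hE : ∀ k, E k ≤ E (k + 1) := fun k => hf1 (E k)
    have hEmono : Monotone E := monotone_nat_of_le_succ hE
    have hstep : ∀ k, ∃ α, α ∈ quotIdeal I (E (k + 1)) ∧ α ∉ quotIdeal I (E k) := by
      intro k
      have hsub : quotIdeal I (E k) ⊆ quotIdeal I (E (k + 1)) := quot_mono hI (hE k)
      have hne : quotIdeal I (E (k + 1)) ≠ quotIdeal I (E k) := hf2 (E k)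
      have : ¬ quotIdeal I (E (k + 1)) ⊆ quotIdeal I (E k) := fun h =>
        hne (Set.Subset.antisymm h hsub)
      exact Set.not_subset.mp this
    choose α hα1 hα2 using hstep
    have hpwo : (Set.univ : Set (Fin n → ℕ)).IsPWO := by have := Set.IsPWO.pi (ι := Fin n) (s := fun _ => (Set.univ : Set ℕ)) (fun _ => Set.isPWO_of_wellQuasiOrderedLE _); rwa [Set.pi_univ] at this
    obtain ⟨g, hg⟩ := hpwo.exists_monotone_subseq (f := α) (fun _ => Set.mem_univ _)
    have h01 : g 0 < g 1 := g.strictMono Nat.zero_lt_one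
    have hle : ∀ i, α (g 0) i ≤ α (g 1) i := fun i => hg (Nat.zero_le 1) i
    have hmem : α (g 0) ∈ quotIdeal I (E (g 1)) :=
      quot_mono hI (hEmono h01) (hα1 (g 0))
    exact hα2 (g 1) (quot_upward hI hmem hle)
  obtain ⟨E, hEstab⟩ := key
  refine ⟨E, hEstab, ?_⟩
  rintro ⟨β, hβ⟩
  have hmem : Fin.tail β ∈ quotIdeal I (max E (β 0)) := by
    refine upward hI hβ fun i => ?_
    refine Fin.cases ?_ ?_ i
    · simp only [Fin.cons_zero]; exact le_max_right E (β 0)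
    · intro j; simp [Fin.tail]
  rw [hEstab _ (le_max_left _ _)] at hmem
  exact ⟨_, hmem⟩
end

section
/- Let n > 0, let t be an ideal n-tree and let e ∈ ℕ with e ≥ min(dom(t)). Let f be the largest element of dom(t) that does not exceed e. Then 𝕀(t)/e = 𝕀(t(f)). -/
open Pointwise

open NTree in
/-- for an ideal `n`-tree `t` (n > 0) and `e ≥ min(dom(t))`, if
`f` is the largest element of `dom(t)` not exceeding `e`, then
`𝕀(t)/e = 𝕀(t(f))`. -/
theorem statement5 {n : ℕ} (t : NTree (n + 1)) (ht : IsIdealTree t) (e : ℕ)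
    (he : t.dom.min' (dom_nonempty t) ≤ e)
    (f : ℕ) (hf : f ∈ t.dom) (hfe : f ≤ e)
    (hmax : ∀ g ∈ t.dom, g ≤ e → g ≤ f) :
    quotIdeal (idealSet t) e = idealSet (t.child f hf) := by
  obtain ⟨d, hd, c⟩ := t
  obtain ⟨hideal, hmono⟩ := ht
  ext α
  simp only [quotIdeal, idealSet, Set.mem_setOf_eq, child, dom] at *
  constructor
  · rintro ⟨e', he', f', β, hef, hβ, hcons⟩
    have h0 : e = f' := by
      have := congrFun hcons 0
      simpa using this
    have hβα : β = α := by
      funext i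
      have := congrFun hcons i.succ
      simpa using this.symm
    subst h0 hβα
    rcases lt_or_eq_of_le (hmax e' he' hef) with h | h
    · exact (hmono e' f he' hf h).1 hβ
    · subst h; exact hβ
  · intro hα
    exact ⟨f, hf, e, α, hfe, hα, rfl⟩
end

section
/- Let n > 0, let I ⊆ ℕ^n be a nonempty monomial ideal and let t be the unique ideal n-tree with 𝕀(t) = I. Then for every e ∈ ℕ: e ∈ dom(t) if and only if I/e ≠ ∅ and (e = 0 or I/(e−1) ⊊ I/e). Moreover, for each e ∈ dom(t), the child t(e) is the unique ideal (n−1)-tree representing I/e. -/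
open Pointwise

theorem NTree.idealSet_nonempty : ∀ {n : ℕ} (t : NTree n), (NTree.idealSet t).Nonempty
  | 0, .leaf => Set.univ_nonempty
  | n + 1, .node d hd c => by
    obtain ⟨e, he⟩ := hd
    obtain ⟨β, hβ⟩ := NTree.idealSet_nonempty (c e he)
    exact ⟨Fin.cons e β, ⟨e, he, e, β, le_rfl, hβ, rfl⟩⟩

open NTree in
/-- if `t` is the ideal tree of a nonempty monomial ideal
`I ⊆ ℕ^n` (n > 0), then `e ∈ dom(t)` iff `I/e ≠ ∅` and (`e = 0` or
`I/(e-1) ⊊ I/e`); moreover each child `t(e)` is the unique ideal tree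
representing `I/e`. -/
theorem statement7 {n : ℕ} (I : Set (Fin (n + 1) → ℕ)) (hI : IsMonomialIdeal I)
    (hne : I.Nonempty) (t : NTree (n + 1)) (ht : IsIdealTree t)
    (htI : idealSet t = I) :
    (∀ e : ℕ, e ∈ t.dom ↔
      (quotIdeal I e).Nonempty ∧ (e = 0 ∨ quotIdeal I (e - 1) ⊂ quotIdeal I e)) ∧
    (∀ (e : ℕ) (he : e ∈ t.dom),
      IsIdealTree (t.child e he) ∧ idealSet (t.child e he) = quotIdeal I e) := by
  obtain ⟨d, hd, c⟩ := t
  rename_i d hd c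
  obtain ⟨hid, hmono⟩ := ht
  -- membership characterization of quotients
  have hmem : ∀ (e : ℕ) (α : Fin n → ℕ), α ∈ quotIdeal I e ↔
      ∃ e', ∃ he' : e' ∈ d, e' ≤ e ∧ α ∈ idealSet (c e' he') := by
    intro e α
    subst htI
    simp only [quotIdeal, idealSet, Set.mem_setOf_eq]
    constructor
    · rintro ⟨e', he', f, β, hef, hβ, hc⟩
      obtain ⟨rfl, rfl⟩ := Fin.cons_injective2 hc
      exact ⟨e', he', hef, hβ⟩
    · rintro ⟨e', he', hle, hα⟩
      exact ⟨e', he', e, α, hle, hα, rfl⟩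
  have hsub : ∀ (a b : ℕ) (ha : a ∈ d) (hb : b ∈ d), a ≤ b →
      idealSet (c a ha) ⊆ idealSet (c b hb) := by
    intro a b ha hb hab
    rcases lt_or_eq_of_le hab with h | h
    · exact (hmono a b ha hb h).subset
    · subst h; exact subset_rfl
  have hquot : ∀ (e : ℕ) (he : e ∈ d), quotIdeal I e = idealSet (c e he) := by
    intro e he
    ext α
    rw [hmem]
    constructor
    · rintro ⟨e', he', hle, hα⟩
      exact hsub e' e he' he hle hα
    · intro hα
      exact ⟨e, he, le_rfl, hα⟩
  constructor
  · intro e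
    constructor
    · intro he
      refine ⟨(hquot e he).symm ▸ NTree.idealSet_nonempty (c e he), ?_⟩
      rcases Nat.eq_zero_or_pos e with h0 | hpos
      · exact Or.inl h0
      refine Or.inr ?_
      rw [hquot e he]
      have hsub1 : quotIdeal I (e - 1) ⊆ idealSet (c e he) := by
        intro α hα
        obtain ⟨e', he', hle, hα'⟩ := (hmem _ α).1 hα
        exact hsub e' e he' he (hle.trans (Nat.sub_le e 1)) hα'
      by_cases hS : ∃ e', ∃ _ : e' ∈ d, e' ≤ e - 1
      · -- take the maximum such e'
        classical
        set S := d.filter (· ≤ e - 1) with hSdef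
        have hSne : S.Nonempty := by
          obtain ⟨e', he', hle⟩ := hS
          exact ⟨e', Finset.mem_filter.2 ⟨he', by simpa using hle⟩⟩
        set m := S.max' hSne with hm
        have hmS : m ∈ S := S.max'_mem hSne
        have hmd : m ∈ d := (Finset.mem_filter.1 hmS).1
        have hmle : m ≤ e - 1 := by simpa using (Finset.mem_filter.1 hmS).2
        have hmlt : m < e := lt_of_le_of_lt hmle (Nat.sub_lt hpos one_pos)
        have hsubm : quotIdeal I (e - 1) ⊆ idealSet (c m hmd) := by
          intro α hα
          obtain ⟨e', he', hle, hα'⟩ := (hmem _ α).1 hα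
          have : e' ∈ S := Finset.mem_filter.2 ⟨he', by simpa using hle⟩
          exact hsub e' m he' hmd (S.le_max' e' this) hα'
        obtain ⟨β, hβc, hβm⟩ := Set.exists_of_ssubset (hmono m e hmd he hmlt)
        exact ⟨hsub1, fun h => hβm (hsubm (h hβc))⟩
      · obtain ⟨β, hβ⟩ := NTree.idealSet_nonempty (c e he)
        refine ⟨hsub1, fun h => ?_⟩
        obtain ⟨e', he', hle, _⟩ := (hmem _ β).1 (h hβ)
        exact hS ⟨e', he', hle⟩
    · rintro ⟨⟨α, hα⟩, h0⟩
      obtain ⟨e', he', hle, hα'⟩ := (hmem e α).1 hα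
      rcases h0 with rfl | hss
      · rwa [Nat.le_zero.1 hle] at he'
      rcases lt_or_eq_of_le hle with hlt | rfl
      · obtain ⟨β, hβ, hβn⟩ := Set.exists_of_ssubset hss
        obtain ⟨e'', he'', hle'', hβ'⟩ := (hmem e β).1 hβ
        rcases lt_or_eq_of_le hle'' with hlt'' | rfl
        · exact absurd ((hmem _ β).2 ⟨e'', he'', Nat.le_sub_one_of_lt hlt'', hβ'⟩) hβn
        · exact he''
      · exact he'
  · intro e he
    exact ⟨hid e he, (hquot e he).symm⟩
end

section
/- Let n > 0, let t be an ideal n-tree, and let α = e·α' ∈ ℕ^n with e ∈ ℕ and α' ∈ ℕ^{n-1}. Then α ∈ 𝕀(t) if and only if e ≥ min(dom(t)) and α' ∈ 𝕀(t(f)), where f is the largest element of dom(t) that does not exceed e. (This establishes the correctness of the recursive membership test 'contains'.) -/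
open Pointwise

open NTree in
/-- correctness of the membership test: for an ideal tree `t` and
`α = e·α'`, one has `α ∈ 𝕀(t)` iff `e ≥ min(dom(t))` and `α' ∈ 𝕀(t(f))` where
`f` is the largest element of `dom(t)` not exceeding `e`. -/
theorem statement8 {n : ℕ} (t : NTree (n + 1)) (ht : IsIdealTree t)
    (e : ℕ) (α' : Fin n → ℕ) :
    Fin.cons e α' ∈ idealSet t ↔
      t.dom.min' (dom_nonempty t) ≤ e ∧
      ∃ (f : ℕ) (hf : f ∈ t.dom), f ≤ e ∧ (∀ g ∈ t.dom, g ≤ e → g ≤ f) ∧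
        α' ∈ idealSet (t.child f hf) := by

  rcases t with _ | ⟨d, hd, c⟩
  obtain ⟨hti, hts⟩ := ht
  constructor
  · rintro ⟨g, hg, f', β, hgf, hβ, hcons⟩
    have he : e = f' := by
      have := congrFun hcons 0; simpa using this
    have hα : α' = β := by
      funext i
      have := congrFun hcons i.succ; simpa using this
    subst he; subst hα
    have hge : g ≤ e := hgf
    constructor
    · exact le_trans (Finset.min'_le _ _ hg) hge
    · set s := d.filter (fun x => x ≤ e) with hs
      have hsne : s.Nonempty := ⟨g, Finset.mem_filter.2 ⟨hg, by simpa using hge⟩⟩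
      set f := s.max' hsne with hf
      have hfs : f ∈ s := s.max'_mem hsne
      have hfd : f ∈ d := (Finset.mem_filter.1 hfs).1
      have hfe : f ≤ e := by simpa using (Finset.mem_filter.1 hfs).2
      refine ⟨f, hfd, hfe, ?_, ?_⟩
      · intro g' hg' hg'e
        exact s.le_max' g' (Finset.mem_filter.2 ⟨hg', by simpa using hg'e⟩)
      · have hgf2 : g ≤ f := s.le_max' g (Finset.mem_filter.2 ⟨hg, by simpa using hge⟩)
        rcases lt_or_eq_of_le hgf2 with h | h
        · exact (hts g f hg hfd h).1 hβ
        · subst h; exact hβ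
  · rintro ⟨_, f, hf, hfe, _, hα⟩
    exact ⟨f, hf, e, α', hfe, hα, rfl⟩
end

section
/- Let n > 0, let t be an ideal n-tree, and let α = x·α' ∈ ℕ^n. Define the n-tree s by: dom(s) = dom(t) ∪ {x}; s(e) = t(e) for all e ∈ dom(t) with e < x; s(e) = the ideal tree of 𝕀(t(e)) ∪ (α' + ℕ^{n-1}) for all e ∈ dom(t) with e > x; s(x) = singleton(α') if x < min(dom(t)), and otherwise s(x) = the ideal tree of 𝕀(t(f)) ∪ (α' + ℕ^{n-1}) where f is the largest element of dom(t) not exceeding x. Then 𝕀(s) = 𝕀(t) ∪ (α + ℕ^n), every child of s is an ideal tree, and 𝕀(s(e)) ⊆ 𝕀(s(f)) for all e < f in dom(s). -/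
open Pointwise

open NTree

lemma mem_singleton_add_univ {n : ℕ} (α γ : Fin n → ℕ) :
    γ ∈ (({α} : Set (Fin n → ℕ)) + Set.univ) ↔ ∀ i, α i ≤ γ i := by
  constructor
  · rintro ⟨a, ha, b, -, rfl⟩
    simp only [Set.mem_singleton_iff] at ha
    subst ha
    intro i
    exact Nat.le_add_right _ _
  · intro h
    exact ⟨α, rfl, fun i => γ i - α i, trivial,
      funext fun i => (Nat.add_sub_cancel' (h i))⟩

lemma mem_idealSet {n : ℕ} (s : NTree (n + 1)) (γ : Fin (n + 1) → ℕ) :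
    γ ∈ idealSet s ↔
      ∃ e, ∃ he : e ∈ s.dom, e ≤ γ 0 ∧ Fin.tail γ ∈ idealSet (s.child e he) := by
  obtain ⟨d, h, c⟩ := s
  simp only [idealSet, dom, child, Set.mem_setOf_eq]
  constructor
  · rintro ⟨e, he, f, β, hef, hβ, rfl⟩
    exact ⟨e, he, by simpa using hef, by simpa [Fin.tail_cons] using hβ⟩
  · rintro ⟨e, he, h1, h2⟩
    exact ⟨e, he, γ 0, Fin.tail γ, h1, h2, (Fin.cons_self_tail γ).symm⟩

lemma isIdealTree_iff {n : ℕ} (s : NTree (n + 1)) :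
    IsIdealTree s ↔ (∀ (e : ℕ) (he : e ∈ s.dom), IsIdealTree (s.child e he)) ∧
      ∀ (e f : ℕ) (he : e ∈ s.dom) (hf : f ∈ s.dom), e < f →
        idealSet (s.child e he) ⊂ idealSet (s.child f hf) := by
  obtain ⟨d, h, c⟩ := s
  exact Iff.rfl

lemma idealSet_child_mono {n : ℕ} (t : NTree (n + 1)) (ht : IsIdealTree t)
    {e f : ℕ} (he : e ∈ t.dom) (hf : f ∈ t.dom) (h : e ≤ f) :
    idealSet (t.child e he) ⊆ idealSet (t.child f hf) := by
  rcases h.lt_or_eq with h' | rfl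
  · exact (((isIdealTree_iff t).1 ht).2 e f he hf h').subset
  · exact subset_rfl

lemma idealSet_singletonTree : ∀ {n : ℕ} (α : Fin n → ℕ),
    idealSet (singletonTree α) = ({α} : Set (Fin n → ℕ)) + Set.univ
  | 0, α => by
    ext γ
    simp only [singletonTree, idealSet, Set.mem_univ, true_iff,
      mem_singleton_add_univ]
    exact fun i => i.elim0
  | n + 1, α => by
    ext γ
    rw [mem_singleton_add_univ]
    show γ ∈ idealSet (node {α 0} _ fun _ _ => singletonTree (Fin.tail α)) ↔ _
    rw [mem_idealSet]
    simp only [dom, child, Finset.mem_singleton, idealSet_singletonTree,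
      mem_singleton_add_univ]
    constructor
    · rintro ⟨e, rfl, h1, h2⟩
      intro i
      refine Fin.cases h1 (fun j => ?_) i
      exact h2 j
    · intro h
      exact ⟨α 0, rfl, h 0, fun j => h j.succ⟩

lemma isIdealTree_singletonTree : ∀ {n : ℕ} (α : Fin n → ℕ),
    IsIdealTree (singletonTree α)
  | 0, _ => trivial
  | n + 1, α => by
    refine ⟨fun e he => isIdealTree_singletonTree (Fin.tail α), ?_⟩
    intro e f he hf hef
    simp only [Finset.mem_singleton] at he hf
    omega

open NTree in
/-- correctness of the insertion step.  Let `t` be an ideal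
`n`-tree and `α = x·α'`.  Let `s` be the tree with `dom(s) = dom(t) ∪ {x}`,
`s(e) = t(e)` for `e ∈ dom(t)`, `e < x`; `s(e)` the ideal tree of
`𝕀(t(e)) ∪ (α' + ℕ^{n-1})` for `e ∈ dom(t)`, `e > x`; `s(x) = singleton(α')`
if `x < min(dom(t))`, and otherwise `s(x)` the ideal tree of
`𝕀(t(f)) ∪ (α' + ℕ^{n-1})` with `f` the largest element of `dom(t)` not
exceeding `x`.  Then `𝕀(s) = 𝕀(t) ∪ (α + ℕ^n)`, every child of `s` is ideal,
and `𝕀(s(e)) ⊆ 𝕀(s(f))` for all `e < f` in `dom(s)`. -/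
theorem statement11 {n : ℕ} (t : NTree (n + 1)) (ht : IsIdealTree t)
    (x : ℕ) (α' : Fin n → ℕ) (s : NTree (n + 1))
    (hdom : s.dom = insert x t.dom)
    (hlt : ∀ (e : ℕ) (he : e ∈ t.dom) (hse : e ∈ s.dom), e < x →
      s.child e hse = t.child e he)
    (hgt : ∀ (e : ℕ) (he : e ∈ t.dom) (hse : e ∈ s.dom), x < e →
      IsIdealTree (s.child e hse) ∧
      idealSet (s.child e hse) =
        idealSet (t.child e he) ∪ (({α'} : Set (Fin n → ℕ)) + Set.univ))
    (hx1 : ∀ hse : x ∈ s.dom, x < t.dom.min' (dom_nonempty t) →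
      s.child x hse = singletonTree α')
    (hx2 : ∀ (hse : x ∈ s.dom) (f : ℕ) (hf : f ∈ t.dom), f ≤ x →
      (∀ g ∈ t.dom, g ≤ x → g ≤ f) →
      IsIdealTree (s.child x hse) ∧
      idealSet (s.child x hse) =
        idealSet (t.child f hf) ∪ (({α'} : Set (Fin n → ℕ)) + Set.univ)) :
    idealSet s =
      idealSet t ∪ (({Fin.cons x α'} : Set (Fin (n + 1) → ℕ)) + Set.univ) ∧
    (∀ (e : ℕ) (he : e ∈ s.dom), IsIdealTree (s.child e he)) ∧
    (∀ (e f : ℕ) (he : e ∈ s.dom) (hf : f ∈ s.dom), e < f →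
      idealSet (s.child e he) ⊆ idealSet (s.child f hf)) := by
  set A : Set (Fin n → ℕ) := ({α'} : Set (Fin n → ℕ)) + Set.univ with hA
  have hxdom : x ∈ s.dom := by rw [hdom]; exact Finset.mem_insert_self _ _
  -- uniform description of the children of `s`
  have key : ∀ (e : ℕ) (hse : e ∈ s.dom),
      IsIdealTree (s.child e hse) ∧
      ((∃ he : e ∈ t.dom, idealSet (s.child e hse) = idealSet (t.child e he) ∧ e < x) ∨
       (∃ (f₀ : ℕ) (hf₀ : f₀ ∈ t.dom), f₀ ≤ e ∧ x ≤ e ∧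
          (∀ g ∈ t.dom, g ≤ e → g ≤ f₀) ∧
          idealSet (s.child e hse) = idealSet (t.child f₀ hf₀) ∪ A) ∨
       (idealSet (s.child e hse) = A ∧ e = x ∧ ∀ g ∈ t.dom, x < g)) := by
    intro e hse
    by_cases hex : e = x
    · subst hex
      by_cases hmin : e < t.dom.min' (dom_nonempty t)
      · have h1 := hx1 hse hmin
        rw [h1]
        refine ⟨isIdealTree_singletonTree α', Or.inr (Or.inr ?_)⟩
        refine ⟨idealSet_singletonTree α', rfl, fun g hg => ?_⟩
        exact lt_of_lt_of_le hmin (Finset.min'_le _ _ hg)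
      · push_neg at hmin
        have hF : (t.dom.filter (· ≤ e)).Nonempty :=
          ⟨t.dom.min' (dom_nonempty t), Finset.mem_filter.2
            ⟨t.dom.min'_mem _, hmin⟩⟩
        set f₀ := (t.dom.filter (· ≤ e)).max' hF with hf₀def
        have hf₀mem : f₀ ∈ t.dom.filter (· ≤ e) := (t.dom.filter (· ≤ e)).max'_mem hF
        have hf₀dom : f₀ ∈ t.dom := (Finset.mem_filter.1 hf₀mem).1
        have hf₀le : f₀ ≤ e := (Finset.mem_filter.1 hf₀mem).2
        have hf₀max : ∀ g ∈ t.dom, g ≤ e → g ≤ f₀ := fun g hg hge =>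
          Finset.le_max' (t.dom.filter (· ≤ e)) g (Finset.mem_filter.2 ⟨hg, hge⟩)
        obtain ⟨hid, hset⟩ := hx2 hse f₀ hf₀dom hf₀le hf₀max
        exact ⟨hid, Or.inr (Or.inl ⟨f₀, hf₀dom, hf₀le, le_rfl, hf₀max, hset⟩)⟩
    · have hed : e ∈ t.dom := by
        rw [hdom] at hse
        exact (Finset.mem_insert.1 hse).resolve_left hex
      rcases lt_or_gt_of_ne hex with hlx | hgx
      · have h1 := hlt e hed hse hlx
        rw [h1]
        exact ⟨((isIdealTree_iff t).1 ht).1 e hed,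
          Or.inl ⟨hed, rfl, hlx⟩⟩
      · obtain ⟨hid, hset⟩ := hgt e hed hse hgx
        exact ⟨hid, Or.inr (Or.inl ⟨e, hed, le_rfl, hgx.le,
          fun g _ hge => hge, hset⟩)⟩
  refine ⟨?_, fun e he => (key e he).1, ?_⟩
  · -- the ideal identity
    ext γ
    rw [mem_idealSet, Set.mem_union, mem_idealSet, mem_singleton_add_univ]
    have hcons : (∀ i : Fin (n + 1), (Fin.cons x α' : Fin (n + 1) → ℕ) i ≤ γ i) ↔
        (x ≤ γ 0 ∧ ∀ j, α' j ≤ Fin.tail γ j) := by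
      constructor
      · intro h
        exact ⟨by simpa using h 0, fun j => by simpa [Fin.tail] using h j.succ⟩
      · rintro ⟨h0, hs⟩ i
        induction i using Fin.cases with
        | zero => simpa using h0
        | succ j => simpa [Fin.tail] using hs j
    rw [hcons]
    constructor
    · rintro ⟨e, hse, hle, hmem⟩
      rcases (key e hse).2 with ⟨he, heq, -⟩ | ⟨f₀, hf₀, hf₀e, hxe, -, heq⟩ |
        ⟨heq, rfl, -⟩
      · exact Or.inl ⟨e, he, hle, heq ▸ hmem⟩
      · rw [heq] at hmem
        rcases hmem with hmem | hmem
        · exact Or.inl ⟨f₀, hf₀, le_trans hf₀e hle, hmem⟩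
        · exact Or.inr ⟨le_trans hxe hle, (mem_singleton_add_univ _ _).1 hmem⟩
      · rw [heq] at hmem
        exact Or.inr ⟨hle, (mem_singleton_add_univ _ _).1 hmem⟩
    · rintro (⟨e, he, hle, hmem⟩ | ⟨h0, hs⟩)
      · have hse : e ∈ s.dom := by rw [hdom]; exact Finset.mem_insert_of_mem he
        refine ⟨e, hse, hle, ?_⟩
        rcases (key e hse).2 with ⟨he', heq, -⟩ | ⟨f₀, hf₀, hf₀e, -, hmax, heq⟩ |
          ⟨-, rfl, hall⟩
        · exact heq ▸ hmem
        · rw [heq]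
          exact Or.inl (idealSet_child_mono t ht he hf₀ (hmax e he le_rfl) hmem)
        · exact absurd (hall e he) (lt_irrefl e)
      · refine ⟨x, hxdom, h0, ?_⟩
        have hAmem : Fin.tail γ ∈ A := (mem_singleton_add_univ _ _).2 hs
        rcases (key x hxdom).2 with ⟨-, -, hxx⟩ | ⟨f₀, hf₀, -, -, -, heq⟩ | ⟨heq, -, -⟩
        · exact absurd hxx (lt_irrefl x)
        · rw [heq]; exact Or.inr hAmem
        · exact heq ▸ hAmem
  · -- monotonicity
    intro e f hse hsf hef
    rcases (key e hse).2 with ⟨he, heqe, hex⟩ | ⟨f₀, hf₀, hf₀e, hxe, hmaxe, heqe⟩ |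
      ⟨heqe, rfl, halle⟩ <;>
    rcases (key f hsf).2 with ⟨hf, heqf, hfx⟩ | ⟨f₁, hf₁, hf₁f, hxf, hmaxf, heqf⟩ |
      ⟨heqf, rfl, hallf⟩
    · rw [heqe, heqf]
      exact idealSet_child_mono t ht he hf hef.le
    · rw [heqe, heqf]
      exact (idealSet_child_mono t ht he hf₁ (hmaxf e he hef.le)).trans
        Set.subset_union_left
    · exact absurd (hallf e he) (by omega)
    · omega
    · rw [heqe, heqf]
      exact Set.union_subset_union_left A
        (idealSet_child_mono t ht hf₀ hf₁ (hmaxf f₀ hf₀ (hf₀e.trans hef.le)))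
    · omega
    · exact absurd (halle f hf) (by omega)
    · rw [heqe, heqf]
      exact Set.subset_union_right
    · omega
end

section
/- Let n > 0 and let s be an n-tree such that every child s(e), e ∈ dom(s), is an ideal (n−1)-tree and such that 𝕀(s(e)) ⊆ 𝕀(s(f)) for all e < f in dom(s). Let s' be the restriction of s to the set D = {f ∈ dom(s) : there is no e ∈ dom(s) with e < f and 𝕀(s(e)) = 𝕀(s(f))}. Then s' is an ideal n-tree and 𝕀(s') = 𝕀(s). -/
open Pointwise

open NTree in
/-- pruning.  Let `s` be an `n`-tree (n > 0) whose children are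
all ideal and whose children's ideals are weakly increasing along `dom(s)`.
Let `s'` be the restriction of `s` to
`D = {f ∈ dom(s) : no e ∈ dom(s) with e < f has 𝕀(s(e)) = 𝕀(s(f))}`.
Then `s'` is an ideal `n`-tree and `𝕀(s') = 𝕀(s)`. -/
theorem statement12 {n : ℕ} (s : NTree (n + 1))
    (hchildren : ∀ (e : ℕ) (he : e ∈ s.dom), IsIdealTree (s.child e he))
    (hmono : ∀ (e f : ℕ) (he : e ∈ s.dom) (hf : f ∈ s.dom), e < f →
      idealSet (s.child e he) ⊆ idealSet (s.child f hf))
    (s' : NTree (n + 1))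
    (hdom : ∀ f : ℕ, f ∈ s'.dom ↔
      ∃ hf : f ∈ s.dom, ∀ (e : ℕ) (he : e ∈ s.dom), e < f →
        idealSet (s.child e he) ≠ idealSet (s.child f hf))
    (hchild : ∀ (f : ℕ) (hf' : f ∈ s'.dom) (hf : f ∈ s.dom),
      s'.child f hf' = s.child f hf) :
    IsIdealTree s' ∧ idealSet s' = idealSet s := by
  classical
  cases s with
  | node d hd c =>
  cases s' with
  | node d' hd' c' =>
  simp only [dom, child, idealSet, IsIdealTree] at hchildren hmono hdom hchild ⊢
  -- membership transfer
  have hsub : ∀ e, e ∈ d' → e ∈ d := fun e he => ((hdom e).1 he).1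
  constructor
  · constructor
    · intro e he'
      have he := hsub e he'
      rw [hchild e he' he]
      exact hchildren e he
    · intro e f he' hf' hef
      have he := hsub e he'
      have hf := hsub f hf'
      rw [hchild e he' he, hchild f hf' hf]
      refine HasSubset.Subset.ssubset_of_ne (hmono e f he hf hef) ?_
      exact ((hdom f).1 hf').2 e he hef
  · ext γ
    constructor
    · rintro ⟨e, he', f, β, hef, hβ, rfl⟩
      have he := hsub e he'
      rw [hchild e he' he] at hβ
      exact ⟨e, he, f, β, hef, hβ, rfl⟩
    · rintro ⟨e, he, f, β, hef, hβ, rfl⟩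
      have hP : ∃ x, ∃ hx : x ∈ d, x ≤ e ∧ idealSet (c x hx) = idealSet (c e he) :=
        ⟨e, he, le_refl e, rfl⟩
      set e' := Nat.find hP with he'def
      obtain ⟨he'd, he'le, he'eq⟩ := Nat.find_spec hP
      have he'' : e' ∈ d' := by
        rw [hdom]
        refine ⟨he'd, fun x hx hxe' hxeq => ?_⟩
        exact Nat.find_min hP hxe' ⟨hx, le_trans (le_of_lt hxe') he'le, hxeq.trans he'eq⟩
      refine ⟨e', he'', f, β, le_trans he'le hef, ?_, rfl⟩
      rw [hchild e' he'' he'd, he'eq]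
      exact hβ
end

section
/- Let n > 0, let I ⊆ ℕ^n be a nonempty monomial ideal, let α = (α_1, …, α_n) ∈ ℕ^n, and let 0 ≤ k ≤ n. Then every subtree at depth k of the ideal tree of I ∪ (α + ℕ^n) is one of the following: a subtree at depth k of the ideal tree of I; the ideal tree of 𝕀(s) ∪ ((α_{k+1}, …, α_n) + ℕ^{n-k}) for some subtree s at depth k of the ideal tree of I; or the ideal tree of (α_{k+1}, …, α_n) + ℕ^{n-k}. -/
open Pointwise

namespace StmtAux

open NTree

/-- Notation shortcut: the principal ideal of `α`. -/
def princ {n : ℕ} (α : Fin n → ℕ) : Set (Fin n → ℕ) :=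
  ({α} : Set (Fin n → ℕ)) + Set.univ

theorem mem_princ {n : ℕ} {α β : Fin n → ℕ} :
    β ∈ princ α ↔ ∀ i, α i ≤ β i := by
  constructor
  · rintro ⟨x, hx, y, -, rfl⟩ i
    rcases hx with rfl
    exact Nat.le_add_right _ _
  · intro h
    exact ⟨α, rfl, fun i => β i - α i, trivial, funext fun i => Nat.add_sub_cancel' (h i)⟩

theorem princ_nonempty {n : ℕ} (α : Fin n → ℕ) : (princ α).Nonempty :=
  ⟨α, mem_princ.2 fun i => le_rfl⟩

theorem idealSet_nonempty : ∀ {n : ℕ} (t : NTree n), (idealSet t).Nonempty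
  | 0, .leaf => ⟨fun i => i.elim0, trivial⟩
  | _ + 1, .node d h c => by
    obtain ⟨e, he⟩ := h
    obtain ⟨β, hβ⟩ := idealSet_nonempty (c e he)
    exact ⟨Fin.cons e β, ⟨e, he, e, β, le_rfl, hβ, rfl⟩⟩

theorem mem_idealSet_node {n : ℕ} {d : Finset ℕ} {h : d.Nonempty}
    {c : (e : ℕ) → e ∈ d → NTree n} {γ : Fin (n + 1) → ℕ} :
    γ ∈ idealSet (.node d h c) ↔
      ∃ (e : ℕ) (he : e ∈ d), e ≤ γ 0 ∧ Fin.tail γ ∈ idealSet (c e he) := by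
  constructor
  · rintro ⟨e, he, f, β, hef, hβ, rfl⟩
    exact ⟨e, he, by simpa using hef, by simpa using hβ⟩
  · rintro ⟨e, he, hef, hβ⟩
    exact ⟨e, he, γ 0, Fin.tail γ, hef, hβ, (Fin.cons_self_tail γ).symm⟩

theorem mem_quot_node {n : ℕ} {d : Finset ℕ} {h : d.Nonempty}
    {c : (e : ℕ) → e ∈ d → NTree n} {f : ℕ} {β : Fin n → ℕ} :
    β ∈ quotIdeal (idealSet (.node d h c)) f ↔
      ∃ (e : ℕ) (he : e ∈ d), e ≤ f ∧ β ∈ idealSet (c e he) := by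
  show Fin.cons f β ∈ idealSet (.node d h c) ↔ _
  rw [mem_idealSet_node]
  simp

end StmtAux

namespace StmtAux
open NTree

theorem child_mono {n : ℕ} {d : Finset ℕ} {h : d.Nonempty}
    {c : (e : ℕ) → e ∈ d → NTree n} (ht : IsIdealTree (.node d h c))
    {e f : ℕ} (he : e ∈ d) (hf : f ∈ d) (hef : e ≤ f) :
    idealSet (c e he) ⊆ idealSet (c f hf) := by
  rcases lt_or_eq_of_le hef with hlt | rfl
  · exact (ht.2 e f he hf hlt).1
  · exact le_rfl

theorem quot_node_of_mem {n : ℕ} {d : Finset ℕ} {h : d.Nonempty}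
    {c : (e : ℕ) → e ∈ d → NTree n} (ht : IsIdealTree (.node d h c))
    {e : ℕ} (he : e ∈ d) :
    quotIdeal (idealSet (.node d h c)) e = idealSet (c e he) := by
  ext β
  rw [mem_quot_node]
  constructor
  · rintro ⟨e', he', hle, hβ⟩
    exact child_mono ht he' he hle hβ
  · intro hβ
    exact ⟨e, he, le_rfl, hβ⟩

theorem quot_node_max {n : ℕ} {d : Finset ℕ} {h : d.Nonempty}
    {c : (e : ℕ) → e ∈ d → NTree n} (ht : IsIdealTree (.node d h c))
    {f : ℕ} (hex : ∃ e ∈ d, e ≤ f) :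
    ∃ (m : ℕ) (hm : m ∈ d), m ≤ f ∧ (∀ e ∈ d, e ≤ f → e ≤ m) ∧
      quotIdeal (idealSet (.node d h c)) f = idealSet (c m hm) := by
  classical
  set s : Finset ℕ := d.filter (· ≤ f) with hs
  have hsne : s.Nonempty := by
    obtain ⟨e, he, hef⟩ := hex
    exact ⟨e, by simp [hs, he, hef]⟩
  set m := s.max' hsne with hm'
  have hmem : m ∈ s := s.max'_mem hsne
  have hmd : m ∈ d := (Finset.mem_filter.1 hmem).1
  have hmf : m ≤ f := by simpa using (Finset.mem_filter.1 hmem).2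
  refine ⟨m, hmd, hmf, fun e he hef => s.le_max' e (by simp [hs, he, hef]), ?_⟩
  ext β
  rw [mem_quot_node]
  constructor
  · rintro ⟨e, he, hef, hβ⟩
    exact child_mono ht he hmd (s.le_max' e (by simp [hs, he, hef])) hβ
  · intro hβ
    exact ⟨m, hmd, hmf, hβ⟩

theorem quot_node_nonempty_iff {n : ℕ} {d : Finset ℕ} {h : d.Nonempty}
    {c : (e : ℕ) → e ∈ d → NTree n} {f : ℕ} :
    (quotIdeal (idealSet (.node d h c)) f).Nonempty ↔ ∃ e ∈ d, e ≤ f := by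
  constructor
  · rintro ⟨β, hβ⟩
    obtain ⟨e, he, hef, -⟩ := mem_quot_node.1 hβ
    exact ⟨e, he, hef⟩
  · rintro ⟨e, he, hef⟩
    obtain ⟨β, hβ⟩ := idealSet_nonempty (c e he)
    exact ⟨β, mem_quot_node.2 ⟨e, he, hef, hβ⟩⟩

theorem mem_dom_char {n : ℕ} {d : Finset ℕ} {h : d.Nonempty}
    {c : (e : ℕ) → e ∈ d → NTree n} (ht : IsIdealTree (.node d h c)) (e : ℕ) :
    e ∈ d ↔ (quotIdeal (idealSet (.node d h c)) e).Nonempty ∧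
      (e = 0 ∨ quotIdeal (idealSet (.node d h c)) (e - 1) ≠
        quotIdeal (idealSet (.node d h c)) e) := by
  set J := idealSet (.node d h c) with hJ
  constructor
  · intro he
    refine ⟨quot_node_nonempty_iff.2 ⟨e, he, le_rfl⟩, ?_⟩
    rcases Nat.eq_zero_or_pos e with rfl | hpos
    · exact Or.inl rfl
    · refine Or.inr fun heq => ?_
      have hq : quotIdeal J e = idealSet (c e he) := quot_node_of_mem ht he
      have hne : (quotIdeal J (e - 1)).Nonempty := by
        rw [heq, hq]; exact idealSet_nonempty _
      obtain ⟨e', he', hef⟩ := quot_node_nonempty_iff.1 hne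
      obtain ⟨m, hm, hmf, -, hqm⟩ := quot_node_max ht ⟨e', he', hef⟩
      have hlt : m < e := lt_of_le_of_lt hmf (Nat.sub_lt hpos one_pos)
      have : idealSet (c m hm) = idealSet (c e he) := by rw [← hqm, heq, hq]
      exact (ht.2 m e hm he hlt).2 this.ge
  · rintro ⟨hne, hor⟩
    obtain ⟨e', he', hef⟩ := quot_node_nonempty_iff.1 hne
    obtain ⟨m, hm, hmf, hmax, hqm⟩ := quot_node_max ht ⟨e', he', hef⟩
    by_contra hed
    have hmne : m ≠ e := fun h' => hed (h' ▸ hm)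
    have hmlt : m < e := lt_of_le_of_ne hmf hmne
    rcases hor with rfl | hneq
    · exact absurd hmlt (Nat.not_lt_zero m)
    · apply hneq
      have hme1 : m ≤ e - 1 := Nat.le_sub_one_of_lt hmlt
      obtain ⟨m', hm', hm'f, hmax', hqm'⟩ := quot_node_max ht ⟨m, hm, hme1⟩
      have h1 : m' ≤ m := hmax m' hm' (le_trans hm'f (Nat.sub_le e 1))
      have h2 : m ≤ m' := hmax' m hm hme1
      have : m' = m := le_antisymm h1 h2
      subst this
      rw [hqm', hqm]

theorem idealTree_unique : ∀ {n : ℕ} (t s : NTree n),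
    IsIdealTree t → IsIdealTree s → idealSet t = idealSet s → t = s
  | 0, .leaf, .leaf, _, _, _ => rfl
  | n + 1, .node d h c, .node d' h' c', ht, hs, hJ => by
    have hd : d = d' := by
      ext e
      rw [mem_dom_char ht e, mem_dom_char hs e, hJ]
    subst hd
    have hc : c = c' := by
      funext e he
      refine idealTree_unique _ _ (ht.1 e he) (hs.1 e he) ?_
      rw [← quot_node_of_mem ht he, ← quot_node_of_mem hs he, hJ]
    subst hc
    rfl

end StmtAux

namespace StmtAux
open NTree

/-- `β` is the tail of `α` after dropping the first `k` coordinates. -/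
def IsTail {n m : ℕ} (α : Fin n → ℕ) (k : ℕ) (β : Fin m → ℕ) : Prop :=
  ∃ h : m + k = n, ∀ i, β i = α (Fin.cast h (i.addNat k))

theorem isTail_succ {n m : ℕ} {α : Fin (n + 1) → ℕ} {k : ℕ} {β : Fin m → ℕ}
    (h : IsTail α (k + 1) β) : IsTail (Fin.tail α) k β := by
  obtain ⟨hmk, hβ⟩ := h
  have hmk' : m + k = n := by omega
  refine ⟨hmk', fun i => ?_⟩
  rw [hβ i]
  show α _ = α (Fin.succ _)
  refine congrArg α (Fin.ext ?_)
  simp [Nat.add_assoc]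

theorem isTail_zero {n : ℕ} {α β : Fin n → ℕ} (h : IsTail α 0 β) : β = α := by
  obtain ⟨hmk, hβ⟩ := h
  funext i
  rw [hβ i]
  refine congrArg α (Fin.ext ?_)
  simp

theorem quot_princ {n : ℕ} {α : Fin (n + 1) → ℕ} {e : ℕ} {β : Fin n → ℕ} :
    β ∈ quotIdeal (princ α) e ↔ α 0 ≤ e ∧ β ∈ princ (Fin.tail α) := by
  show Fin.cons e β ∈ princ α ↔ _
  rw [mem_princ, mem_princ, Fin.forall_fin_succ]
  simp [Fin.tail]

theorem quot_princ_of_le {n : ℕ} {α : Fin (n + 1) → ℕ} {e : ℕ} (h : α 0 ≤ e) :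
    quotIdeal (princ α) e = princ (Fin.tail α) := by
  ext β; rw [quot_princ]; simp [h]

theorem quot_princ_of_lt {n : ℕ} {α : Fin (n + 1) → ℕ} {e : ℕ} (h : e < α 0) :
    quotIdeal (princ α) e = ∅ := by
  ext β; rw [quot_princ]; simp [Nat.not_le.2 h]

theorem subAt_zero : ∀ {n : ℕ} (t : NTree n), subAt t 0 = {⟨n, t⟩}
  | 0, .leaf => rfl
  | _ + 1, .node _ _ _ => rfl

theorem sub_of_singleton : ∀ (k : ℕ) {n : ℕ} (t : NTree n), IsIdealTree t →
    ∀ (γ : Fin n → ℕ), idealSet t = princ γ →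
    ∀ {m : ℕ} (u : NTree m), (⟨m, u⟩ : (m : ℕ) × NTree m) ∈ subAt t k →
    ∀ (β : Fin m → ℕ), IsTail γ k β →
    IsIdealTree u ∧ idealSet u = princ β := by
  intro k
  induction k with
  | zero =>
    intro n t ht γ hγ m u hu β hβ
    have h1 : (⟨m, u⟩ : (m : ℕ) × NTree m) = ⟨n, t⟩ := by rw [subAt_zero] at hu; exact hu
    obtain rfl : m = n := congrArg Sigma.fst h1
    obtain rfl : u = t := by simpa using h1
    rw [isTail_zero hβ]
    exact ⟨ht, hγ⟩
  | succ k ih =>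
    intro n t ht γ hγ m u hu β hβ
    cases t with
    | leaf => simp [subAt] at hu
    | node d h c =>
      obtain ⟨e, he, hu'⟩ : ∃ (e : ℕ) (he : e ∈ d),
          (⟨m, u⟩ : (m : ℕ) × NTree m) ∈ subAt (c e he) k := by
        simpa [subAt, Set.mem_iUnion] using hu
      have hq : quotIdeal (idealSet (.node d h c)) e = idealSet (c e he) :=
        quot_node_of_mem ht he
      have hle : γ 0 ≤ e := by
        by_contra hlt
        have : idealSet (c e he) = ∅ := by
          rw [← hq, hγ, quot_princ_of_lt (Nat.not_le.1 hlt)]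
        exact absurd (this ▸ idealSet_nonempty (c e he)) (by simp)
      have hset : idealSet (c e he) = princ (Fin.tail γ) := by
        rw [← hq, hγ, quot_princ_of_le hle]
      exact ih (c e he) (ht.1 e he) (Fin.tail γ) hset u hu' β (isTail_succ hβ)

end StmtAux

namespace StmtAux
open NTree

theorem main_lemma : ∀ (k : ℕ) {n : ℕ} (tI tJ : NTree n), IsIdealTree tI →
    IsIdealTree tJ → ∀ (α : Fin n → ℕ), idealSet tJ = idealSet tI ∪ princ α →
    ∀ {m : ℕ} (u : NTree m), (⟨m, u⟩ : (m : ℕ) × NTree m) ∈ subAt tJ k →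
    ∀ (β : Fin m → ℕ), IsTail α k β →
    (⟨m, u⟩ : (m : ℕ) × NTree m) ∈ subAt tI k ∨
    (∃ v : NTree m, (⟨m, v⟩ : (m : ℕ) × NTree m) ∈ subAt tI k ∧
      IsIdealTree u ∧ idealSet u = idealSet v ∪ princ β) ∨
    (IsIdealTree u ∧ idealSet u = princ β) := by
  intro k
  induction k with
  | zero =>
    intro n tI tJ htI htJ α hJ m u hu β hβ
    have h1 : (⟨m, u⟩ : (m : ℕ) × NTree m) = ⟨n, tJ⟩ := by
      rw [subAt_zero] at hu; exact hu
    obtain rfl : m = n := congrArg Sigma.fst h1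
    obtain rfl : u = tJ := by simpa using h1
    refine Or.inr (Or.inl ⟨tI, ?_, htJ, ?_⟩)
    · rw [subAt_zero]; rfl
    · rw [isTail_zero hβ]; exact hJ
  | succ k ih =>
    intro n tI tJ htI htJ α hJ m u hu β hβ
    cases tJ with
    | leaf => simp [subAt] at hu
    | node d h c =>
      cases tI with
      | node dI hI cI =>
        obtain ⟨e, he, hu'⟩ : ∃ (e : ℕ) (he : e ∈ d),
            (⟨m, u⟩ : (m : ℕ) × NTree m) ∈ subAt (c e he) k := by
          simpa [subAt, Set.mem_iUnion] using hu
        have hq : idealSet (c e he) =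
            quotIdeal (idealSet (.node dI hI cI)) e ∪ quotIdeal (princ α) e := by
          rw [← quot_node_of_mem htJ he, hJ]; rfl
        by_cases hα : α 0 ≤ e
        · rw [quot_princ_of_le hα] at hq
          by_cases hex : ∃ e' ∈ dI, e' ≤ e
          · obtain ⟨mm, hmm, hmmf, -, hqI⟩ := quot_node_max htI hex
            rw [hqI] at hq
            rcases ih (cI mm hmm) (c e he) (htI.1 mm hmm) (htJ.1 e he)
                (Fin.tail α) hq u hu' β (isTail_succ hβ) with h1 | ⟨v, hv, h2⟩ | h3
            · exact Or.inl (by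
                simp only [subAt, Set.mem_iUnion]
                exact ⟨mm, hmm, h1⟩)
            · exact Or.inr (Or.inl ⟨v, by
                simp only [subAt, Set.mem_iUnion]
                exact ⟨mm, hmm, hv⟩, h2⟩)
            · exact Or.inr (Or.inr h3)
          · have hempty : quotIdeal (idealSet (.node dI hI cI)) e = ∅ := by
              rw [← Set.not_nonempty_iff_eq_empty, quot_node_nonempty_iff]
              exact hex
            rw [hempty, Set.empty_union] at hq
            exact Or.inr (Or.inr
              (sub_of_singleton k (c e he) (htJ.1 e he) (Fin.tail α) hq u hu' β
                (isTail_succ hβ)))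
        · rw [quot_princ_of_lt (Nat.not_le.1 hα), Set.union_empty] at hq
          have hex : ∃ e' ∈ dI, e' ≤ e := by
            rw [← quot_node_nonempty_iff (h := hI), ← hq]
            exact idealSet_nonempty _
          obtain ⟨mm, hmm, hmmf, -, hqI⟩ := quot_node_max htI hex
          have hEq : c e he = cI mm hmm :=
            idealTree_unique _ _ (htJ.1 e he) (htI.1 mm hmm) (hq.trans hqI)
          rw [hEq] at hu'
          exact Or.inl (by
            simp only [subAt, Set.mem_iUnion]
            exact ⟨mm, hmm, hu'⟩)

end StmtAux


open NTree in
/-- every subtree at depth `k` of the ideal tree of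
`I ∪ (α + ℕ^n)` is a subtree at depth `k` of the ideal tree of `I`, or the
ideal tree of `𝕀(s) ∪ ((α_{k+1},…,α_n) + ℕ^{n-k})` for some subtree `s` at
depth `k` of the ideal tree of `I`, or the ideal tree of
`(α_{k+1},…,α_n) + ℕ^{n-k}`. -/
theorem statement13 {n : ℕ} (I : Set (Fin (n + 1) → ℕ)) (hI : IsMonomialIdeal I)
    (hne : I.Nonempty) (α : Fin (n + 1) → ℕ) (k : ℕ) (hk : k ≤ n + 1)
    (tI : NTree (n + 1)) (htI : IsIdealTree tI) (hItI : idealSet tI = I)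
    (tJ : NTree (n + 1)) (htJ : IsIdealTree tJ)
    (hItJ : idealSet tJ = I ∪ (({α} : Set (Fin (n + 1) → ℕ)) + Set.univ))
    (u : NTree (n + 1 - k)) (hu : (⟨n + 1 - k, u⟩ : (m : ℕ) × NTree m) ∈ subAt tJ k) :
    (⟨n + 1 - k, u⟩ : (m : ℕ) × NTree m) ∈ subAt tI k ∨
    (∃ v : NTree (n + 1 - k), (⟨n + 1 - k, v⟩ : (m : ℕ) × NTree m) ∈ subAt tI k ∧
      IsIdealTree u ∧
      idealSet u = idealSet v ∪
        (({tailFrom α k hk} : Set (Fin (n + 1 - k) → ℕ)) + Set.univ)) ∨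
    (IsIdealTree u ∧
      idealSet u = ({tailFrom α k hk} : Set (Fin (n + 1 - k) → ℕ)) + Set.univ) := by
  have hJ : idealSet tJ = idealSet tI ∪ StmtAux.princ α := by
    rw [hItJ, hItI]; rfl
  have hβ : StmtAux.IsTail α k (tailFrom α k hk) :=
    ⟨Nat.sub_add_cancel hk, fun i => rfl⟩
  exact StmtAux.main_lemma k tI tJ htI htJ α hJ u hu (tailFrom α k hk) hβ
end

section
/- Let n > 0, let I ⊆ ℕ^n be a nonempty monomial ideal and let α ∈ ℕ^n. Then width(I ∪ (α + ℕ^n)) ≤ 2 · width(I) + 1, where the width of a nonempty monomial ideal is the width of its unique ideal tree. -/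
open Pointwise

namespace Stmt14Aux

open NTree

/-- The upper cone of `δ`: all `β` with `δ ≤ β` pointwise. -/
def cone {m : ℕ} (δ : Fin m → ℕ) : Set (Fin m → ℕ) := {β | ∀ i, δ i ≤ β i}

/-- `cone δ` if `b`, otherwise `∅`. -/
def coneIf {m : ℕ} (b : Bool) (δ : Fin m → ℕ) : Set (Fin m → ℕ) :=
  if b then cone δ else ∅

theorem cone_nonempty {m : ℕ} (δ : Fin m → ℕ) : (cone δ).Nonempty :=
  ⟨δ, fun _ => le_refl _⟩

theorem singleton_add_univ {m : ℕ} (δ : Fin m → ℕ) :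
    ({δ} : Set (Fin m → ℕ)) + Set.univ = cone δ := by
  ext β
  constructor
  · intro hβ
    rw [Set.mem_add] at hβ
    obtain ⟨a, ha, b, -, rfl⟩ := hβ
    rw [Set.mem_singleton_iff] at ha
    subst ha
    intro i
    simp
  · intro hβ
    rw [Set.mem_add]
    refine ⟨δ, rfl, fun i => β i - δ i, trivial, funext fun i => ?_⟩
    simp [Nat.add_sub_cancel' (hβ i)]

theorem idealSet_nonempty : ∀ {n : ℕ} (t : NTree n), (idealSet t).Nonempty
  | 0, leaf => ⟨fun _ => 0, trivial⟩
  | _ + 1, node d h c => by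
    obtain ⟨e, he⟩ := h
    obtain ⟨β, hβ⟩ := idealSet_nonempty (c e he)
    exact ⟨Fin.cons e β, ⟨e, he, e, β, le_refl _, hβ, rfl⟩⟩

theorem mem_quot_node {n : ℕ} {d : Finset ℕ} {h : d.Nonempty}
    {c : (e : ℕ) → e ∈ d → NTree n} (e : ℕ) (β : Fin n → ℕ) :
    β ∈ quotIdeal (idealSet (node d h c)) e ↔
      ∃ (e' : ℕ) (he' : e' ∈ d), e' ≤ e ∧ β ∈ idealSet (c e' he') := by
  constructor
  · rintro ⟨e', he', f, β', hef, hβ', hcons⟩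
    have h0 : e = f := by
      have := congrFun hcons 0
      simpa using this
    have h1 : β = β' := by
      funext i
      have := congrFun hcons i.succ
      simpa using this
    subst h0; subst h1
    exact ⟨e', he', hef, hβ'⟩
  · rintro ⟨e', he', hle, hβ⟩
    exact ⟨e', he', e, β, hle, hβ, rfl⟩

theorem child_mono {n : ℕ} {d : Finset ℕ} {h : d.Nonempty}
    {c : (e : ℕ) → e ∈ d → NTree n} (hid : IsIdealTree (node d h c))
    {e f : ℕ} (he : e ∈ d) (hf : f ∈ d) (hef : e ≤ f) :
    idealSet (c e he) ⊆ idealSet (c f hf) := by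
  rcases eq_or_lt_of_le hef with rfl | hlt
  · exact Set.Subset.rfl
  · exact (hid.2 e f he hf hlt).subset

theorem quot_node_max {n : ℕ} {d : Finset ℕ} {h : d.Nonempty}
    {c : (e : ℕ) → e ∈ d → NTree n} (hid : IsIdealTree (node d h c))
    {e m : ℕ} (hm : m ∈ d) (hme : m ≤ e) (hmax : ∀ e' ∈ d, e' ≤ e → e' ≤ m) :
    quotIdeal (idealSet (node d h c)) e = idealSet (c m hm) := by
  ext β
  rw [mem_quot_node]
  constructor
  · rintro ⟨e', he', hle, hβ⟩
    exact child_mono hid he' hm (hmax e' he' hle) hβ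
  · intro hβ
    exact ⟨m, hm, hme, hβ⟩

theorem quot_node_self {n : ℕ} {d : Finset ℕ} {h : d.Nonempty}
    {c : (e : ℕ) → e ∈ d → NTree n} (hid : IsIdealTree (node d h c))
    {e : ℕ} (he : e ∈ d) :
    quotIdeal (idealSet (node d h c)) e = idealSet (c e he) :=
  quot_node_max hid he (le_refl e) (fun _ _ h' => h')

theorem quot_node_empty {n : ℕ} {d : Finset ℕ} {h : d.Nonempty}
    {c : (e : ℕ) → e ∈ d → NTree n} (e : ℕ) (hne : ∀ e' ∈ d, ¬ e' ≤ e) :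
    quotIdeal (idealSet (node d h c)) e = ∅ := by
  ext β
  rw [mem_quot_node]
  simp only [Set.mem_empty_iff_false, iff_false, not_exists]
  intro e' he' h
  exact hne e' he' h.1

theorem mem_dom_iff {n : ℕ} {d : Finset ℕ} {h : d.Nonempty}
    {c : (e : ℕ) → e ∈ d → NTree n} (hid : IsIdealTree (node d h c)) (e : ℕ) :
    e ∈ d ↔ quotIdeal (idealSet (node d h c)) e ≠
      (if e = 0 then ∅ else quotIdeal (idealSet (node d h c)) (e - 1)) := by
  constructor
  · intro he
    have hqe : quotIdeal (idealSet (node d h c)) e = idealSet (c e he) :=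
      quot_node_self hid he
    by_cases h0 : e = 0
    · subst h0
      simp only [if_pos rfl]
      rw [hqe]
      obtain ⟨β, hβ⟩ := idealSet_nonempty (c 0 he)
      intro hcon
      rw [hcon] at hβ
      exact hβ
    · simp only [if_neg h0]
      rw [hqe]
      by_cases hF : (d.filter (· ≤ e - 1)).Nonempty
      · set m := (d.filter (· ≤ e - 1)).max' hF with hmdef
        have hmF : m ∈ d.filter (· ≤ e - 1) := Finset.max'_mem _ hF
        have hmd : m ∈ d := (Finset.mem_filter.mp hmF).1
        have hmle : m ≤ e - 1 := by
          have := (Finset.mem_filter.mp hmF).2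
          simpa using this
        have hq1 : quotIdeal (idealSet (node d h c)) (e - 1) = idealSet (c m hmd) :=
          quot_node_max hid hmd hmle (fun e' he' hle =>
            Finset.le_max' _ e' (Finset.mem_filter.mpr ⟨he', by simpa using hle⟩))
        rw [hq1]
        have hmlt : m < e := by omega
        have := hid.2 m e hmd he hmlt
        exact fun hcon => this.ne (hcon.symm)
      · have hq1 : quotIdeal (idealSet (node d h c)) (e - 1) = ∅ := by
          apply quot_node_empty
          intro e' he' hle
          exact hF ⟨e', Finset.mem_filter.mpr ⟨he', by simpa using hle⟩⟩
        rw [hq1]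
        obtain ⟨β, hβ⟩ := idealSet_nonempty (c e he)
        intro hcon
        rw [hcon] at hβ
        exact hβ
  · intro hne
    by_contra he
    apply hne
    by_cases h0 : e = 0
    · subst h0
      simp only [if_pos rfl]
      apply quot_node_empty
      intro e' he' hle
      have he0 : e' = 0 := Nat.le_zero.mp hle
      subst he0
      exact he he'
    · simp only [if_neg h0]
      ext β
      rw [mem_quot_node, mem_quot_node]
      constructor
      · rintro ⟨e', he', hle, hβ⟩
        have : e' ≠ e := fun hcon => he (hcon ▸ he')
        exact ⟨e', he', by omega, hβ⟩
      · rintro ⟨e', he', hle, hβ⟩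
        exact ⟨e', he', by omega, hβ⟩

theorem idealTree_unique : ∀ {n : ℕ} (t s : NTree n), IsIdealTree t → IsIdealTree s →
    idealSet t = idealSet s → t = s := by
  intro n
  induction n with
  | zero =>
    intro t s _ _ _
    cases t; cases s; rfl
  | succ n ih =>
    intro t s ht hs hts
    cases t with | node dt hdt ct =>
    cases s with | node ds hds cs =>
    have hd : dt = ds := by
      ext e
      rw [mem_dom_iff ht e, mem_dom_iff hs e, hts]
    subst hd
    have hc : ct = cs := by
      funext e he
      apply ih _ _ (ht.1 e he) (hs.1 e he)
      rw [← quot_node_self ht he, ← quot_node_self hs he, hts]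
    subst hc
    rfl

theorem subAt_zero : ∀ {n : ℕ} (t : NTree n),
    subAt t 0 = {(⟨n, t⟩ : (m : ℕ) × NTree m)}
  | _, leaf => rfl
  | _, node _ _ _ => rfl

theorem mem_subAt_node {n : ℕ} {d : Finset ℕ} {h : d.Nonempty}
    {c : (e : ℕ) → e ∈ d → NTree n} {k : ℕ} {p : (m : ℕ) × NTree m} :
    p ∈ subAt (node d h c) (k + 1) ↔ ∃ (e : ℕ) (he : e ∈ d), p ∈ subAt (c e he) k := by
  show p ∈ ⋃ (e : ℕ) (he : e ∈ d), subAt (c e he) k ↔ _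
  simp only [Set.mem_iUnion]

theorem subAt_fst : ∀ {n : ℕ} (t : NTree n) (k : ℕ) (p : (m : ℕ) × NTree m),
    p ∈ subAt t k → p.1 + k = n
  | n, t, 0, p, hp => by
    rw [subAt_zero] at hp
    obtain rfl : p = ⟨n, t⟩ := hp
    rfl
  | 0, leaf, k + 1, p, hp => absurd hp (Set.notMem_empty p)
  | n + 1, node d h c, k + 1, p, hp => by
    obtain ⟨e, he, hp'⟩ := mem_subAt_node.mp hp
    have := subAt_fst (c e he) k p hp'
    omega

theorem subAt_isIdeal : ∀ {n : ℕ} (t : NTree n), IsIdealTree t →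
    ∀ (k : ℕ) (p : (m : ℕ) × NTree m), p ∈ subAt t k → IsIdealTree p.2
  | n, t, ht, 0, p, hp => by
    rw [subAt_zero] at hp
    obtain rfl : p = ⟨n, t⟩ := hp
    exact ht
  | 0, leaf, _, k + 1, p, hp => absurd hp (Set.notMem_empty p)
  | n + 1, node d h c, ht, k + 1, p, hp => by
    obtain ⟨e, he, hp'⟩ := mem_subAt_node.mp hp
    exact subAt_isIdeal (c e he) (ht.1 e he) k p hp'

theorem subAt_finite : ∀ {n : ℕ} (t : NTree n) (k : ℕ), (subAt t k).Finite
  | _, t, 0 => by rw [subAt_zero]; exact Set.finite_singleton _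
  | 0, leaf, _ + 1 => Set.finite_empty
  | n + 1, node d h c, k + 1 => by
    have heq : subAt (node d h c) (k + 1)
        = ⋃ e ∈ (d : Set ℕ), ⋃ (he : e ∈ d), subAt (c e he) k := by
      show (⋃ (e : ℕ) (he : e ∈ d), subAt (c e he) k) = _
      ext p
      simp only [Set.mem_iUnion, Finset.mem_coe]
      constructor
      · rintro ⟨e, he, hp⟩; exact ⟨e, he, he, hp⟩
      · rintro ⟨e, _, he, hp⟩; exact ⟨e, he, hp⟩
    rw [heq]
    apply Set.Finite.biUnion d.finite_toSet
    intro e he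
    have heq2 : (⋃ (he' : e ∈ d), subAt (c e he') k) = subAt (c e he) k := by
      ext p
      simp only [Set.mem_iUnion]
      exact ⟨fun ⟨_, hp⟩ => hp, fun hp => ⟨he, hp⟩⟩
    rw [heq2]
    exact subAt_finite (c e he) k

theorem quot_union {n : ℕ} (X Y : Set (Fin (n + 1) → ℕ)) (e : ℕ) :
    quotIdeal (X ∪ Y) e = quotIdeal X e ∪ quotIdeal Y e := rfl

theorem quot_cone {n : ℕ} (δ : Fin (n + 1) → ℕ) (e : ℕ) :
    quotIdeal (cone δ) e = if δ 0 ≤ e then cone (Fin.tail δ) else ∅ := by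
  ext β
  simp only [quotIdeal, cone, Set.mem_setOf_eq, Fin.forall_fin_succ, Fin.cons_zero,
    Fin.cons_succ, Fin.tail]
  by_cases h : δ 0 ≤ e
  · simp [h, cone, Fin.tail]
  · simp [h]

theorem quot_coneIf {n : ℕ} (b : Bool) (δ : Fin (n + 1) → ℕ) (e : ℕ) :
    ∃ b' : Bool, quotIdeal (coneIf b δ) e = coneIf b' (Fin.tail δ) := by
  cases b
  · exact ⟨false, rfl⟩
  · by_cases h : δ 0 ≤ e
    · exact ⟨true, by simp [coneIf, quot_cone, h]⟩
    · exact ⟨false, by simp [coneIf, quot_cone, h]⟩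

theorem tail_cast_succ {n' m k : ℕ} (hm : m + (k + 1) = n' + 1) (hm' : m + k = n')
    (γ : Fin (n' + 1) → ℕ) :
    (fun i : Fin m => Fin.tail γ (Fin.cast hm' (i.addNat k))) =
    (fun i : Fin m => γ (Fin.cast hm (i.addNat (k + 1)))) := by
  funext i
  show γ (Fin.succ (Fin.cast hm' (i.addNat k))) = γ (Fin.cast hm (i.addNat (k + 1)))
  exact congrArg γ (by ext; simp; omega)

theorem cone_subtree : ∀ (k : ℕ) {n : ℕ} (t : NTree n), IsIdealTree t →
    ∀ (δ : Fin n → ℕ), idealSet t = cone δ →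
    ∀ (m : ℕ) (hm : m + k = n) (s : NTree m), (⟨m, s⟩ : (m' : ℕ) × NTree m') ∈ subAt t k →
    idealSet s = cone (fun i => δ (Fin.cast hm (i.addNat k))) := by
  intro k
  induction k with
  | zero =>
    intro n t ht δ hδ m hm s hs
    have hmn : m = n := hm
    subst hmn
    rw [subAt_zero] at hs
    have hst : s = t := by simpa using hs
    subst hst
    have hγ : (fun i : Fin m => δ (Fin.cast hm (i.addNat 0))) = δ :=
      funext fun i => congrArg δ (by ext; simp)
    rw [hγ, hδ]
  | succ k ih =>
    intro n t ht δ hδ m hm s hs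
    cases t with
    | leaf => exact absurd hs (Set.notMem_empty _)
    | @node n' d h c =>
      obtain ⟨e, he, hs'⟩ := mem_subAt_node.mp hs
      have hm' : m + k = n' := by omega
      have hchild : idealSet (c e he) = if δ 0 ≤ e then cone (Fin.tail δ) else ∅ := by
        rw [← quot_cone, ← hδ, quot_node_self ht he]
      by_cases hle : δ 0 ≤ e
      · rw [if_pos hle] at hchild
        have := ih (c e he) (ht.1 e he) (Fin.tail δ) hchild m hm' s hs'
        rwa [tail_cast_succ hm hm'] at this
      · rw [if_neg hle] at hchild
        obtain ⟨β, hβ⟩ := idealSet_nonempty (c e he)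
        rw [hchild] at hβ
        exact absurd hβ (Set.notMem_empty _)

theorem main_sub : ∀ (k : ℕ) {n : ℕ} (tJ tI : NTree n), IsIdealTree tJ → IsIdealTree tI →
    ∀ (b : Bool) (γ : Fin n → ℕ), idealSet tJ = idealSet tI ∪ coneIf b γ →
    ∀ (m : ℕ) (hm : m + k = n) (s : NTree m),
      (⟨m, s⟩ : (m' : ℕ) × NTree m') ∈ subAt tJ k →
    (∃ s' : NTree m, (⟨m, s'⟩ : (m' : ℕ) × NTree m') ∈ subAt tI k ∧
       (idealSet s = idealSet s' ∨
        idealSet s = idealSet s' ∪ cone (fun i => γ (Fin.cast hm (i.addNat k))))) ∨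
    idealSet s = cone (fun i => γ (Fin.cast hm (i.addNat k))) := by
  intro k
  induction k with
  | zero =>
    intro n tJ tI htJ htI b γ hJI m hm s hs
    have hmn : m = n := hm
    subst hmn
    rw [subAt_zero] at hs
    have hst : s = tJ := by simpa using hs
    subst hst
    left
    refine ⟨tI, by rw [subAt_zero]; rfl, ?_⟩
    have hγ : (fun i : Fin m => γ (Fin.cast hm (i.addNat 0))) = γ :=
      funext fun i => congrArg γ (by ext; simp)
    cases b
    · left
      rw [hJI]
      simp [coneIf]
    · right
      rw [hγ, hJI]
      rfl
  | succ k ih =>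
    intro n tJ tI htJ htI b γ hJI m hm s hs
    cases tJ with
    | leaf => exact absurd hs (Set.notMem_empty _)
    | @node n' dJ hJ cJ =>
      cases tI with | @node n'2 dI hI cI =>
      obtain ⟨e, he, hs'⟩ := mem_subAt_node.mp hs
      have hm' : m + k = n' := by omega
      obtain ⟨b', hb'⟩ := quot_coneIf b γ e
      have hchild : idealSet (cJ e he)
          = quotIdeal (idealSet (node dI hI cI)) e ∪ coneIf b' (Fin.tail γ) := by
        rw [← hb', ← quot_union, ← hJI, quot_node_self htJ he]
      by_cases hF : (dI.filter (· ≤ e)).Nonempty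
      · set m' := (dI.filter (· ≤ e)).max' hF with hm'def
        have hm'F : m' ∈ dI.filter (· ≤ e) := Finset.max'_mem _ hF
        have hm'd : m' ∈ dI := (Finset.mem_filter.mp hm'F).1
        have hm'le : m' ≤ e := by
          have := (Finset.mem_filter.mp hm'F).2
          simpa using this
        have hq : quotIdeal (idealSet (node dI hI cI)) e = idealSet (cI m' hm'd) :=
          quot_node_max htI hm'd hm'le (fun e' he' hle =>
            Finset.le_max' _ e' (Finset.mem_filter.mpr ⟨he', by simpa using hle⟩))
        rw [hq] at hchild
        rcases ih (cJ e he) (cI m' hm'd) (htJ.1 e he) (htI.1 m' hm'd) b' (Fin.tail γ)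
            hchild m hm' s hs' with ⟨s', hs'', hor⟩ | hcone
        · left
          refine ⟨s', mem_subAt_node.mpr ⟨m', hm'd, hs''⟩, ?_⟩
          rcases hor with h1 | h1
          · exact Or.inl h1
          · right
            rwa [tail_cast_succ hm hm'] at h1
        · right
          rwa [tail_cast_succ hm hm'] at hcone
      · have hq : quotIdeal (idealSet (node dI hI cI)) e = ∅ := by
          apply quot_node_empty
          intro e' he' hle
          exact hF ⟨e', Finset.mem_filter.mpr ⟨he', by simpa using hle⟩⟩
        rw [hq, Set.empty_union] at hchild
        cases b' with
        | false =>
          obtain ⟨β, hβ⟩ := idealSet_nonempty (cJ e he)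
          rw [hchild] at hβ
          exact absurd hβ (Set.notMem_empty _)
        | true =>
          have hchild' : idealSet (cJ e he) = cone (Fin.tail γ) := hchild
          have := cone_subtree k (cJ e he) (htJ.1 e he) (Fin.tail γ) hchild' m hm' s hs'
          right
          rwa [tail_cast_succ hm hm'] at this

theorem ncard_level {n : ℕ} (tI tJ : NTree (n + 1)) (htI : IsIdealTree tI)
    (htJ : IsIdealTree tJ) (γ : Fin (n + 1) → ℕ)
    (hJI : idealSet tJ = idealSet tI ∪ cone γ) (k : ℕ) (hk : k ≤ n + 1) :
    (subAt tJ k).ncard ≤ 2 * (subAt tI k).ncard + 1 := by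
  have hm : (n + 1 - k) + k = n + 1 := Nat.sub_add_cancel hk
  set m := n + 1 - k with hmdef
  set τ : Fin m → ℕ := fun i => γ (Fin.cast hm (i.addNat k)) with hτdef
  set AJ : Set (NTree m) := {s | (⟨m, s⟩ : (m' : ℕ) × NTree m') ∈ subAt tJ k} with hAJ
  set AI : Set (NTree m) := {s | (⟨m, s⟩ : (m' : ℕ) × NTree m') ∈ subAt tI k} with hAI
  have himg : ∀ t : NTree (n + 1),
      subAt t k = Sigma.mk m '' {s : NTree m | (⟨m, s⟩ : (m' : ℕ) × NTree m') ∈ subAt t k} := by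
    intro t
    ext p
    constructor
    · intro hp
      have hf := subAt_fst t k p hp
      rcases p with ⟨m', s⟩
      have hf' : m' + k = n + 1 := hf
      have hmm : m' = m := by omega
      subst hmm
      exact ⟨s, hp, rfl⟩
    · rintro ⟨s, hs, rfl⟩
      exact hs
  have hAIfin : AI.Finite := by
    apply Set.Finite.of_finite_image _ (Set.injOn_of_injective sigma_mk_injective)
    rw [← himg tI]
    exact subAt_finite tI k
  have hAJfin : AJ.Finite := by
    apply Set.Finite.of_finite_image _ (Set.injOn_of_injective sigma_mk_injective)
    rw [← himg tJ]
    exact subAt_finite tJ k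
  have hcardJ : (subAt tJ k).ncard = AJ.ncard := by
    rw [himg tJ, Set.ncard_image_of_injective _ sigma_mk_injective]
  have hcardI : (subAt tI k).ncard = AI.ncard := by
    rw [himg tI, Set.ncard_image_of_injective _ sigma_mk_injective]
  have hinj : Set.InjOn idealSet AJ := by
    intro s hs s' hs' heq
    exact idealTree_unique s s' (subAt_isIdeal tJ htJ k ⟨m, s⟩ hs)
      (subAt_isIdeal tJ htJ k ⟨m, s'⟩ hs') heq
  have hsub : idealSet '' AJ ⊆
      (idealSet '' AI) ∪ ((fun X => X ∪ cone τ) '' (idealSet '' AI)) ∪ {cone τ} := by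
    rintro X ⟨s, hs, rfl⟩
    have hJI' : idealSet tJ = idealSet tI ∪ coneIf true γ := by
      rw [hJI]; rfl
    rcases main_sub k tJ tI htJ htI true γ hJI' m hm s hs with ⟨s', hs', hor⟩ | hcone
    · rcases hor with h1 | h1
      · exact Or.inl (Or.inl ⟨s', hs', h1.symm⟩)
      · exact Or.inl (Or.inr ⟨idealSet s', ⟨s', hs', rfl⟩, h1.symm⟩)
    · exact Or.inr hcone
  have hfinI1 : (idealSet '' AI).Finite := hAIfin.image _
  have hfinI2 : ((fun X => X ∪ cone τ) '' (idealSet '' AI)).Finite := hfinI1.image _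
  have hbig : ((idealSet '' AI) ∪ ((fun X => X ∪ cone τ) '' (idealSet '' AI))
      ∪ {cone τ}).Finite := (hfinI1.union hfinI2).union (Set.finite_singleton _)
  have h1 : AJ.ncard = (idealSet '' AJ).ncard :=
    (Set.ncard_image_of_injOn hinj).symm
  have h2 : (idealSet '' AJ).ncard ≤
      ((idealSet '' AI) ∪ ((fun X => X ∪ cone τ) '' (idealSet '' AI)) ∪ {cone τ}).ncard :=
    Set.ncard_le_ncard hsub hbig
  have h3 : ((idealSet '' AI) ∪ ((fun X => X ∪ cone τ) '' (idealSet '' AI))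
      ∪ {cone τ}).ncard ≤
      ((idealSet '' AI) ∪ ((fun X => X ∪ cone τ) '' (idealSet '' AI))).ncard
        + ({cone τ} : Set (Set (Fin m → ℕ))).ncard :=
    Set.ncard_union_le _ _
  have h4 : ((idealSet '' AI) ∪ ((fun X => X ∪ cone τ) '' (idealSet '' AI))).ncard ≤
      (idealSet '' AI).ncard + ((fun X => X ∪ cone τ) '' (idealSet '' AI)).ncard :=
    Set.ncard_union_le _ _
  have h5 : (idealSet '' AI).ncard ≤ AI.ncard := Set.ncard_image_le hAIfin
  have h6 : ((fun X => X ∪ cone τ) '' (idealSet '' AI)).ncard ≤ (idealSet '' AI).ncard :=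
    Set.ncard_image_le hfinI1
  have h7 : ({cone τ} : Set (Set (Fin m → ℕ))).ncard = 1 := Set.ncard_singleton _
  omega

end Stmt14Aux

open NTree in
/-- inserting a monomial at most doubles the width, plus one:
`width(I ∪ (α + ℕ^n)) ≤ 2·width(I) + 1`, where the width of a nonempty
monomial ideal is the width of its unique ideal tree. -/
theorem statement14 {n : ℕ} (I : Set (Fin (n + 1) → ℕ)) (hI : IsMonomialIdeal I)
    (hne : I.Nonempty) (α : Fin (n + 1) → ℕ)
    (tI : NTree (n + 1)) (htI : IsIdealTree tI) (hItI : idealSet tI = I)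
    (tJ : NTree (n + 1)) (htJ : IsIdealTree tJ)
    (hItJ : idealSet tJ = I ∪ (({α} : Set (Fin (n + 1) → ℕ)) + Set.univ)) :
    width tJ ≤ 2 * width tI + 1 := by
  have hJI : idealSet tJ = idealSet tI ∪ Stmt14Aux.cone α := by
    rw [hItJ, hItI, Stmt14Aux.singleton_add_univ]
  apply Finset.sup_le
  intro k hk
  have hk' : k ≤ n + 1 := by
    have := Finset.mem_range.mp hk
    omega
  have hlevel := Stmt14Aux.ncard_level tI tJ htI htJ α hJI k hk'
  have hwI : (subAt tI k).ncard ≤ width tI :=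
    Finset.le_sup (f := fun k => (subAt tI k).ncard) hk
  omega
end

section
/- Let n > 0 and let I ⊆ ℕ^n be a monomial ideal generated by r ≥ 1 monomials, i.e. I = ⟨{α^{(1)}, …, α^{(r)}}⟩ for some α^{(1)}, …, α^{(r)} ∈ ℕ^n. Then the width of the ideal tree of I is at most 2^r − 1. -/
open Pointwise

namespace NTreeAux
open NTree

lemma mem_add_univ {m : ℕ} (A : Set (Fin m → ℕ)) (γ : Fin m → ℕ) :
    γ ∈ A + (Set.univ : Set (Fin m → ℕ)) ↔ ∃ a ∈ A, a ≤ γ := by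
  rw [Set.mem_add]
  constructor
  · rintro ⟨a, ha, y, -, rfl⟩
    exact ⟨a, ha, le_self_add⟩
  · rintro ⟨a, ha, hle⟩
    obtain ⟨y, rfl⟩ := le_iff_exists_add.mp hle
    exact ⟨a, ha, y, trivial, rfl⟩

lemma idealSet_nonempty : ∀ {m : ℕ} (t : NTree m), (idealSet t).Nonempty
  | 0, .leaf => ⟨fun i => i.elim0, trivial⟩
  | _ + 1, .node d hd c => by
    obtain ⟨e, he⟩ := hd
    obtain ⟨β, hβ⟩ := idealSet_nonempty (c e he)
    exact ⟨Fin.cons e β, e, he, e, β, le_rfl, hβ, rfl⟩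

lemma le_cons_iff {m : ℕ} (a : Fin (m + 1) → ℕ) (e : ℕ) (α : Fin m → ℕ) :
    a ≤ Fin.cons e α ↔ a 0 ≤ e ∧ Fin.tail a ≤ α := by
  constructor
  · intro hle
    exact ⟨by simpa using hle 0, fun j => by simpa [Fin.tail] using hle j.succ⟩
  · rintro ⟨h0, ht⟩ j
    refine Fin.cases ?_ (fun j => ?_) j
    · simpa using h0
    · simpa [Fin.tail] using ht j

lemma quot_node {m : ℕ} (d : Finset ℕ) (hd : d.Nonempty)
    (c : (e : ℕ) → e ∈ d → NTree m) (f : ℕ) :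
    quotIdeal (idealSet (node d hd c)) f
      = {α | ∃ e, ∃ he : e ∈ d, e ≤ f ∧ α ∈ idealSet (c e he)} := by
  ext α
  simp only [quotIdeal, idealSet, Set.mem_setOf_eq]
  constructor
  · rintro ⟨e, he, f', β, hef, hβ, hcons⟩
    have h0 : f = f' := by simpa using congrFun hcons 0
    have htail : α = β := by
      funext j
      simpa using congrFun hcons j.succ
    refine ⟨e, he, by omega, by rw [htail]; exact hβ⟩
  · rintro ⟨e, he, hef, hα⟩
    exact ⟨e, he, f, α, hef, hα, rfl⟩

lemma children_mono {m : ℕ} {d : Finset ℕ} {hd : d.Nonempty}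
    {c : (e : ℕ) → e ∈ d → NTree m} (hI : IsIdealTree (node d hd c))
    {e f : ℕ} (he : e ∈ d) (hf : f ∈ d) (hef : e ≤ f) :
    idealSet (c e he) ⊆ idealSet (c f hf) := by
  rcases eq_or_lt_of_le hef with rfl | hlt
  · exact subset_rfl
  · exact (hI.2 e f he hf hlt).subset

lemma quot_mem {m : ℕ} {d : Finset ℕ} {hd : d.Nonempty}
    {c : (e : ℕ) → e ∈ d → NTree m} (hI : IsIdealTree (node d hd c))
    {f : ℕ} (hf : f ∈ d) :
    quotIdeal (idealSet (node d hd c)) f = idealSet (c f hf) := by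
  rw [quot_node]
  ext α
  simp only [Set.mem_setOf_eq]
  constructor
  · rintro ⟨e, he, hef, hα⟩
    exact children_mono hI he hf hef hα
  · intro hα
    exact ⟨f, hf, le_rfl, hα⟩

lemma quot_cmax {m : ℕ} {d : Finset ℕ} {hd : d.Nonempty}
    {c : (e : ℕ) → e ∈ d → NTree m} (hI : IsIdealTree (node d hd c)) (f : ℕ)
    (hs : (d.filter (· ≤ f)).Nonempty) :
    quotIdeal (idealSet (node d hd c)) f
      = idealSet (c ((d.filter (· ≤ f)).max' hs)
          (Finset.mem_of_mem_filter _ ((d.filter (· ≤ f)).max'_mem hs))) := by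
  have hmem := (d.filter (· ≤ f)).max'_mem hs
  have he₀d : (d.filter (· ≤ f)).max' hs ∈ d := Finset.mem_of_mem_filter _ hmem
  have he₀f : (d.filter (· ≤ f)).max' hs ≤ f := (Finset.mem_filter.mp hmem).2
  rw [quot_node]
  ext α
  simp only [Set.mem_setOf_eq]
  constructor
  · rintro ⟨e, he, hef, hα⟩
    have hle : e ≤ (d.filter (· ≤ f)).max' hs :=
      Finset.le_max' (d.filter (· ≤ f)) e (Finset.mem_filter.mpr ⟨he, hef⟩)
    exact children_mono hI he he₀d hle hα
  · intro hα
    exact ⟨_, he₀d, he₀f, hα⟩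

lemma quot_empty {m : ℕ} {d : Finset ℕ} {hd : d.Nonempty}
    {c : (e : ℕ) → e ∈ d → NTree m} (f : ℕ) (hs : d.filter (· ≤ f) = ∅) :
    quotIdeal (idealSet (node d hd c)) f = ∅ := by
  rw [quot_node]
  ext α
  simp only [Set.mem_setOf_eq, Set.mem_empty_iff_false, iff_false]
  rintro ⟨e, he, hef, -⟩
  have : e ∈ d.filter (· ≤ f) := Finset.mem_filter.mpr ⟨he, hef⟩
  rw [hs] at this
  exact absurd this (Finset.notMem_empty e)

lemma mem_dom_iff {m : ℕ} {d : Finset ℕ} {hd : d.Nonempty}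
    {c : (e : ℕ) → e ∈ d → NTree m} (hI : IsIdealTree (node d hd c)) (f : ℕ) :
    f ∈ d ↔ quotIdeal (idealSet (node d hd c)) f ≠ ∅ ∧
      ∀ g < f, quotIdeal (idealSet (node d hd c)) g
        ≠ quotIdeal (idealSet (node d hd c)) f := by
  constructor
  · intro hf
    have hQf : quotIdeal (idealSet (node d hd c)) f = idealSet (c f hf) := quot_mem hI hf
    have hne : (idealSet (c f hf)).Nonempty := idealSet_nonempty _
    refine ⟨by rw [hQf]; exact hne.ne_empty, ?_⟩
    intro g hg hEq
    rcases (d.filter (· ≤ g)).eq_empty_or_nonempty with hgs | hgs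
    · rw [quot_empty g hgs, hQf] at hEq
      exact hne.ne_empty hEq.symm
    · rw [quot_cmax hI g hgs, hQf] at hEq
      have he₀d : (d.filter (· ≤ g)).max' hgs ∈ d :=
        Finset.mem_of_mem_filter _ ((d.filter (· ≤ g)).max'_mem hgs)
      have he₀g : (d.filter (· ≤ g)).max' hgs ≤ g :=
        (Finset.mem_filter.mp ((d.filter (· ≤ g)).max'_mem hgs)).2
      have hlt : (d.filter (· ≤ g)).max' hgs < f := lt_of_le_of_lt he₀g hg
      exact absurd hEq (hI.2 _ f he₀d hf hlt).ne
  · rintro ⟨hne, hstr⟩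
    by_contra hf
    rcases (d.filter (· ≤ f)).eq_empty_or_nonempty with hfs | hfs
    · exact hne (quot_empty f hfs)
    · have hmem := (d.filter (· ≤ f)).max'_mem hfs
      have he₀d : (d.filter (· ≤ f)).max' hfs ∈ d := Finset.mem_of_mem_filter _ hmem
      have he₀f : (d.filter (· ≤ f)).max' hfs ≤ f := (Finset.mem_filter.mp hmem).2
      have hlt : (d.filter (· ≤ f)).max' hfs < f :=
        lt_of_le_of_ne he₀f (fun h => hf (h ▸ he₀d))
      have h1 : quotIdeal (idealSet (node d hd c)) ((d.filter (· ≤ f)).max' hfs)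
          = idealSet (c _ he₀d) := quot_mem hI he₀d
      have h2 : quotIdeal (idealSet (node d hd c)) f
          = idealSet (c _ he₀d) := quot_cmax hI f hfs
      exact hstr _ hlt (h1.trans h2.symm)

theorem idealSet_inj : ∀ {m : ℕ} (t t' : NTree m),
    IsIdealTree t → IsIdealTree t' → idealSet t = idealSet t' → t = t' := by
  intro m
  induction m with
  | zero =>
    intro t t' _ _ _
    cases t; cases t'; rfl
  | succ m ih =>
    intro t t' h1 h2 h
    cases t with | node d hd c =>
    cases t' with | node d' hd' c' =>
    have hd_eq : d = d' := by
      ext f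
      rw [mem_dom_iff h1 f, mem_dom_iff h2 f, h]
    subst hd_eq
    have hc : c = c' := by
      funext e he
      apply ih (c e he) (c' e he) (h1.1 e he) (h2.1 e he)
      have ha : quotIdeal (idealSet (node d hd c)) e = idealSet (c e he) := quot_mem h1 he
      have hb : quotIdeal (idealSet (node d hd' c')) e = idealSet (c' e he) := quot_mem h2 he
      rw [← ha, ← hb, h]
    subst hc
    rfl

lemma quot_union {r m : ℕ} (g : Fin r → Fin (m + 1) → ℕ) (S : Finset (Fin r)) (e : ℕ) :
    quotIdeal (⋃ i ∈ S, ({g i} + (Set.univ : Set (Fin (m + 1) → ℕ)))) e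
      = ⋃ i ∈ S.filter (fun i => g i 0 ≤ e),
          ({Fin.tail (g i)} + (Set.univ : Set (Fin m → ℕ))) := by
  ext α
  simp only [quotIdeal, Set.mem_setOf_eq, Set.mem_iUnion, Finset.mem_filter]
  constructor
  · rintro ⟨i, hi, hmem⟩
    rw [mem_add_univ] at hmem
    obtain ⟨a, ha, hle⟩ := hmem
    rw [Set.mem_singleton_iff] at ha
    subst ha
    rw [le_cons_iff] at hle
    exact ⟨i, ⟨hi, hle.1⟩, (mem_add_univ _ _).mpr ⟨Fin.tail (g i), rfl, hle.2⟩⟩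
  · rintro ⟨i, ⟨hi, h0⟩, hmem⟩
    rw [mem_add_univ] at hmem
    obtain ⟨a, ha, hle⟩ := hmem
    rw [Set.mem_singleton_iff] at ha
    subst ha
    exact ⟨i, hi, (mem_add_univ _ _).mpr ⟨g i, rfl, (le_cons_iff _ _ _).mpr ⟨h0, hle⟩⟩⟩

theorem subAt_structure (r : ℕ) :
    ∀ (k m : ℕ) (g : Fin r → Fin m → ℕ),
    ∃ (m' : ℕ) (h : Fin r → Fin m' → ℕ),
      ∀ (t : NTree m), IsIdealTree t → ∀ S : Finset (Fin r),
        idealSet t = ⋃ i ∈ S, ({g i} + (Set.univ : Set (Fin m → ℕ))) →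
        ∀ p ∈ subAt t k, IsIdealTree p.2 ∧
          ∃ S' : Finset (Fin r), S'.Nonempty ∧
            (⟨p.1, idealSet p.2⟩ : Σ q, Set (Fin q → ℕ))
              = ⟨m', ⋃ i ∈ S', ({h i} + (Set.univ : Set (Fin m' → ℕ)))⟩ := by
  intro k
  induction k with
  | zero =>
    intro m g
    refine ⟨m, g, ?_⟩
    intro t ht S hS p hp
    have hp' : p = ⟨m, t⟩ := by simpa [subAt] using hp
    subst hp'
    refine ⟨ht, S, ?_, by rw [hS]⟩
    obtain ⟨β, hβ⟩ := idealSet_nonempty t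
    rw [hS] at hβ
    simp only [Set.mem_iUnion] at hβ
    obtain ⟨i, hi, -⟩ := hβ
    exact ⟨i, hi⟩
  | succ k ih =>
    intro m
    cases m with
    | zero =>
      intro g
      refine ⟨0, g, ?_⟩
      intro t ht S hS p hp
      cases t
      simp [subAt] at hp
    | succ m =>
      intro g
      obtain ⟨m', h, IH⟩ := ih m (fun i => Fin.tail (g i))
      refine ⟨m', h, ?_⟩
      intro t ht S hS p hp
      cases t with | node d hd c =>
      simp only [subAt, Set.mem_iUnion] at hp
      obtain ⟨e, he, hpe⟩ := hp
      have key : idealSet (c e he)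
          = ⋃ i ∈ S.filter (fun i => g i 0 ≤ e),
              ({Fin.tail (g i)} + (Set.univ : Set (Fin m → ℕ))) := by
        rw [← quot_mem ht he, hS, quot_union]
      exact IH (c e he) (ht.1 e he) _ key p hpe

end NTreeAux

open NTree in
/-- if a monomial ideal `I ⊆ ℕ^n` (n > 0) is generated by
`r ≥ 1` monomials, then the width of its ideal tree is at most `2^r - 1`. -/
theorem statement15 {n r : ℕ} (hr : 1 ≤ r) (gens : Fin r → (Fin (n + 1) → ℕ))
    (t : NTree (n + 1)) (ht : IsIdealTree t)
    (hIt : idealSet t = Set.range gens + Set.univ) :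
    width t ≤ 2 ^ r - 1 := by
  have hS0 : idealSet t = ⋃ i ∈ (Finset.univ : Finset (Fin r)),
      ({gens i} + (Set.univ : Set (Fin (n + 1) → ℕ))) := by
    rw [hIt]
    ext γ
    simp only [Set.mem_iUnion, Finset.mem_univ, exists_true_left]
    rw [NTreeAux.mem_add_univ]
    constructor
    · rintro ⟨a, ⟨i, rfl⟩, hle⟩
      exact ⟨i, (NTreeAux.mem_add_univ _ _).mpr ⟨gens i, rfl, hle⟩⟩
    · rintro ⟨i, hmem⟩
      rw [NTreeAux.mem_add_univ] at hmem
      obtain ⟨a, ha, hle⟩ := hmem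
      rw [Set.mem_singleton_iff] at ha
      subst ha
      exact ⟨gens i, ⟨i, rfl⟩, hle⟩
  unfold width
  apply Finset.sup_le
  intro k hk
  obtain ⟨m', h, H⟩ := NTreeAux.subAt_structure r k (n + 1) gens
  have hmain := fun p hp => H t ht Finset.univ hS0 p hp
  set F : (Σ q, NTree q) → Σ q, Set (Fin q → ℕ) := fun p => ⟨p.1, idealSet p.2⟩ with hF
  have hinj : Set.InjOn F (subAt t k) := by
    rintro ⟨a, s⟩ hp ⟨b, u⟩ hq hpq
    have hia := (hmain _ hp).1
    have hib := (hmain _ hq).1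
    have h1 : a = b := congrArg Sigma.fst hpq
    subst h1
    have h2 : HEq (idealSet s) (idealSet u) := (Sigma.ext_iff.mp hpq).2
    have heq : idealSet s = idealSet u := eq_of_heq h2
    rw [NTreeAux.idealSet_inj s u hia hib heq]
  have himg : F '' subAt t k ⊆
      (fun S : Finset (Fin r) =>
        (⟨m', ⋃ i ∈ S, ({h i} + (Set.univ : Set (Fin m' → ℕ)))⟩ : Σ q, Set (Fin q → ℕ))) ''
        {S | S.Nonempty} := by
    rintro x ⟨p, hp, rfl⟩
    obtain ⟨-, S', hS', hEq⟩ := hmain p hp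
    exact ⟨S', hS', hEq.symm⟩
  calc (subAt t k).ncard
      = (F '' subAt t k).ncard := (Set.ncard_image_of_injOn hinj).symm
    _ ≤ ((fun S : Finset (Fin r) =>
        (⟨m', ⋃ i ∈ S, ({h i} + (Set.univ : Set (Fin m' → ℕ)))⟩ : Σ q, Set (Fin q → ℕ))) ''
        {S | S.Nonempty}).ncard := Set.ncard_le_ncard himg (Set.toFinite _)
    _ ≤ ({S : Finset (Fin r) | S.Nonempty}).ncard := Set.ncard_image_le (Set.toFinite _)
    _ = 2 ^ r - 1 := by
        have huniv : {S : Finset (Fin r) | S.Nonempty}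
            = Set.univ \ {(∅ : Finset (Fin r))} := by
          ext S
          simp [Finset.nonempty_iff_ne_empty]
        rw [huniv, Set.ncard_diff (by simp) (Set.toFinite _), Set.ncard_univ,
          Set.ncard_singleton, Nat.card_eq_fintype_card, Fintype.card_finset,
          Fintype.card_fin]
end

section
/- Let n > 0 and let I ⊆ ℕ^n be a nonempty monomial ideal generated by a set of monomials all of whose exponents are at most e, i.e. I = ⟨E⟩ for some nonempty E ⊆ {0, 1, …, e}^n. Then the branching degree of the ideal tree of I is at most e + 1; that is, every subtree s of positive height of the ideal tree of I satisfies |dom(s)| ≤ e + 1. -/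
open Pointwise

section MyAux
open NTree

lemma myMemAddUniv {n : ℕ} (S : Set (Fin n → ℕ)) (x : Fin n → ℕ) :
    x ∈ S + (Set.univ : Set (Fin n → ℕ)) ↔ ∃ s ∈ S, ∀ i, s i ≤ x i := by
  constructor
  · rintro ⟨s, hs, b, -, rfl⟩
    exact ⟨s, hs, fun i => Nat.le_add_right _ _⟩
  · rintro ⟨s, hs, hle⟩
    exact ⟨s, hs, fun i => x i - s i, Set.mem_univ _,
      funext fun i => Nat.add_sub_cancel' (hle i)⟩

lemma myIdealSetNonempty : ∀ {n : ℕ} (t : NTree n), (idealSet t).Nonempty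
  | 0, .leaf => ⟨fun _ => 0, Set.mem_univ _⟩
  | _ + 1, .node d hd c => by
    obtain ⟨e, he⟩ := hd
    obtain ⟨β, hβ⟩ := myIdealSetNonempty (c e he)
    exact ⟨Fin.cons e β, e, he, e, β, le_rfl, hβ, rfl⟩

lemma myChildSubset {n : ℕ} {t : NTree (n+1)} (ht : IsIdealTree t) {a b : ℕ}
    (ha : a ∈ t.dom) (hb : b ∈ t.dom) (hab : a ≤ b) :
    idealSet (t.child a ha) ⊆ idealSet (t.child b hb) := by
  cases t with
  | node d hd c =>
    obtain ⟨h1, h2⟩ := ht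
    rcases lt_or_eq_of_le hab with h | rfl
    · exact (h2 a b ha hb h).subset
    · exact subset_rfl

lemma myChildEqQuot {n : ℕ} {t : NTree (n+1)} (ht : IsIdealTree t) {a : ℕ}
    (ha : a ∈ t.dom) :
    idealSet (t.child a ha) = quotIdeal (idealSet t) a := by
  ext β
  constructor
  · intro hβ
    cases t with
    | node d hd c => exact ⟨a, ha, a, β, le_rfl, hβ, rfl⟩
  · intro hβ
    cases t with
    | node d hd c =>
      obtain ⟨e, he, f, β', hef, hβ', heq⟩ := hβ
      have h0 : a = f := by simpa using congrFun heq 0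
      have h1 : β = β' := by
        funext i
        simpa using congrFun heq i.succ
      subst h1
      exact myChildSubset ht he ha (by omega) hβ'

lemma myQuotAddUniv {n : ℕ} (E : Set (Fin (n+1) → ℕ)) (f : ℕ) :
    quotIdeal (E + Set.univ) f
      = (Fin.tail '' {α ∈ E | α 0 ≤ f}) + Set.univ := by
  ext β
  simp only [quotIdeal, Set.mem_setOf_eq, myMemAddUniv]
  constructor
  · rintro ⟨α, hα, hle⟩
    refine ⟨Fin.tail α, ⟨α, ⟨hα, by simpa using hle 0⟩, rfl⟩, fun i => ?_⟩
    simpa [Fin.tail] using hle i.succ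
  · rintro ⟨γ, ⟨α, ⟨hα, h0⟩, rfl⟩, hle⟩
    refine ⟨α, hα, fun i => ?_⟩
    refine Fin.cases ?_ ?_ i
    · simpa using h0
    · intro j
      simpa [Fin.tail] using hle j

lemma myQuotStab {n : ℕ} (e : ℕ) (E : Set (Fin (n+1) → ℕ))
    (hbound : ∀ α ∈ E, ∀ i, α i ≤ e) {f : ℕ} (hf : e ≤ f) :
    quotIdeal (E + Set.univ) f = (Fin.tail '' E) + Set.univ := by
  rw [myQuotAddUniv]
  have : {α ∈ E | α 0 ≤ f} = E := by
    ext α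
    exact ⟨fun h => h.1, fun h => ⟨h, le_trans (hbound α h 0) hf⟩⟩
  rw [this]

lemma myDomCardLe {n : ℕ} (e : ℕ) (E : Set (Fin (n+1) → ℕ))
    (hbound : ∀ α ∈ E, ∀ i, α i ≤ e)
    (t : NTree (n+1)) (ht : IsIdealTree t) (hIt : idealSet t = E + Set.univ) :
    t.dom.card ≤ e + 1 := by
  have key : ∀ d1 ∈ t.dom, ∀ d2 ∈ t.dom, e ≤ d1 → e ≤ d2 → d1 = d2 := by
    intro d1 h1 d2 h2 he1 he2
    by_contra hne
    have heq : idealSet (t.child d1 h1) = idealSet (t.child d2 h2) := by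
      rw [myChildEqQuot ht h1, myChildEqQuot ht h2, hIt,
        myQuotStab e E hbound he1, myQuotStab e E hbound he2]
    rcases Nat.lt_or_ge d1 d2 with h | h
    · have hss : idealSet (t.child d1 h1) ⊂ idealSet (t.child d2 h2) := by
        cases t with
        | node d hd c => exact ht.2 d1 d2 h1 h2 h
      exact hss.ne heq
    · rcases Nat.lt_or_ge d2 d1 with h' | h'
      · have hss : idealSet (t.child d2 h2) ⊂ idealSet (t.child d1 h1) := by
          cases t with
          | node d hd c => exact ht.2 d2 d1 h2 h1 h'
        exact hss.ne heq.symm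
      · omega
  by_cases hex : ∃ d0 ∈ t.dom, e ≤ d0
  · obtain ⟨d0, hd0, hed0⟩ := hex
    have hsub : t.dom ⊆ insert d0 (Finset.range e) := by
      intro a ha
      rcases Nat.lt_or_ge a e with h | h
      · exact Finset.mem_insert_of_mem (Finset.mem_range.mpr h)
      · exact Finset.mem_insert.mpr (Or.inl (key a ha d0 hd0 h hed0))
    calc t.dom.card ≤ (insert d0 (Finset.range e)).card :=
          Finset.card_le_card hsub
      _ ≤ (Finset.range e).card + 1 := Finset.card_insert_le _ _
      _ = e + 1 := by simp
  · push_neg at hex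
    have hsub : t.dom ⊆ Finset.range e := fun a ha =>
      Finset.mem_range.mpr (hex a ha)
    exact le_trans (Finset.card_le_card hsub) (by simp)

lemma mySubAtZero {m k : ℕ} (s : NTree (m+1)) (t : NTree 0) :
    (⟨m + 1, s⟩ : (m : ℕ) × NTree m) ∉ subAt t k := by
  cases t
  cases k with
  | zero =>
    intro h
    simp only [subAt, Set.mem_singleton_iff] at h
    exact absurd (congrArg Sigma.fst h) (by simp)
  | succ k =>
    intro h
    simp only [subAt] at h
    exact h

lemma myMainAux : ∀ (n e : ℕ) (E : Set (Fin (n + 1) → ℕ)),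
    (∀ α ∈ E, ∀ i, α i ≤ e) →
    ∀ t : NTree (n + 1), IsIdealTree t → idealSet t = E + Set.univ →
    ∀ (k m : ℕ) (s : NTree (m + 1)),
      (⟨m + 1, s⟩ : (m : ℕ) × NTree m) ∈ subAt t k → s.dom.card ≤ e + 1 := by
  intro n
  induction n with
  | zero =>
    intro e E hbound t ht hIt k m s hmem
    cases k with
    | zero =>
      simp only [subAt, Set.mem_singleton_iff] at hmem
      injection hmem with h1 h2
      obtain rfl : m = 0 := by omega
      obtain rfl := eq_of_heq h2
      exact myDomCardLe e E hbound _ ht hIt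
    | succ k =>
      cases t with
      | node d hd c =>
        simp only [subAt, Set.mem_iUnion] at hmem
        obtain ⟨a, ha, h⟩ := hmem
        exact absurd h (mySubAtZero s (c a ha))
  | succ n' ih =>
    intro e E hbound t ht hIt k m s hmem
    cases k with
    | zero =>
      simp only [subAt, Set.mem_singleton_iff] at hmem
      injection hmem with h1 h2
      obtain rfl : m = n' + 1 := by omega
      obtain rfl := eq_of_heq h2
      exact myDomCardLe e E hbound _ ht hIt
    | succ k =>
      cases t with
      | node d hd c =>
        simp only [subAt, Set.mem_iUnion] at hmem
        obtain ⟨a, ha, h⟩ := hmem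
        have hcq : idealSet (c a ha)
            = (Fin.tail '' {α ∈ E | α 0 ≤ a}) + Set.univ := by
          have := myChildEqQuot (t := node d hd c) ht (a := a) ha
          rw [hIt, myQuotAddUniv] at this
          exact this
        have hbound' : ∀ β ∈ Fin.tail '' {α ∈ E | α 0 ≤ a}, ∀ i, β i ≤ e := by
          rintro β ⟨α, ⟨hα, -⟩, rfl⟩ i
          exact hbound α hα i.succ
        exact ih e _ hbound' (c a ha) (ht.1 a ha) hcq k m s h

end MyAux

open NTree in
/-- if a nonempty monomial ideal `I ⊆ ℕ^n` (n > 0) is generated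
by monomials with all exponents at most `e`, then the branching degree of its
ideal tree is at most `e + 1`: every subtree of positive height `s` of the
ideal tree satisfies `|dom(s)| ≤ e + 1`. -/
theorem statement16 {n : ℕ} (e : ℕ) (E : Set (Fin (n + 1) → ℕ)) (hE : E.Nonempty)
    (hbound : ∀ α ∈ E, ∀ i, α i ≤ e)
    (t : NTree (n + 1)) (ht : IsIdealTree t) (hIt : idealSet t = E + Set.univ) :
    branchingDegree t ≤ e + 1 ∧
    ∀ (m : ℕ) (s : NTree (m + 1)),
      (⟨m + 1, s⟩ : (m : ℕ) × NTree m) ∈ allSub t → s.dom.card ≤ e + 1 := by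
  have hsub : ∀ (m : ℕ) (s : NTree (m + 1)),
      (⟨m + 1, s⟩ : (m : ℕ) × NTree m) ∈ allSub t → s.dom.card ≤ e + 1 := by
    intro m s hs
    obtain ⟨k, hk⟩ : ∃ k, (⟨m + 1, s⟩ : (m : ℕ) × NTree m) ∈ subAt t k := by
      simpa [allSub] using hs
    exact myMainAux n e E hbound t ht hIt k m s hk
  refine ⟨?_, hsub⟩
  apply csSup_le'
  rintro x ⟨⟨m', s⟩, hp, hm, rfl⟩
  cases m' with
  | zero => exact absurd rfl hm
  | succ m => exact hsub m s hp
end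

section
/- Let n ≥ 1 and d ≥ 0, and let I_{n,d} ⊆ ℕ^n be the monomial ideal generated by all vectors of coordinate sum exactly d, i.e. I_{n,d} = {α ∈ ℕ^n : α_1 + ⋯ + α_n ≥ d}. Then I_{n,d} is minimally generated by exactly binom(d+n−1, n−1) monomials (namely the vectors of coordinate sum d), while the width of its ideal tree is at most d + 1: for every 0 ≤ k ≤ n, the number of pairwise distinct subtrees at depth k of the ideal tree of I_{n,d} is at most d + 1. -/
open Pointwise

namespace NTree

theorem idealSet_nonempty_s19 : ∀ {n : ℕ} (t : NTree n), (idealSet t).Nonempty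
  | 0, leaf => ⟨fun i => 0, Set.mem_univ _⟩
  | n + 1, node d hd c => by
      obtain ⟨e, he⟩ := hd
      obtain ⟨β, hβ⟩ := idealSet_nonempty_s19 (c e he)
      exact ⟨Fin.cons e β, e, he, e, β, le_refl e, hβ, rfl⟩

theorem mem_idealSet_iff {n : ℕ} (t : NTree (n + 1)) (γ : Fin (n + 1) → ℕ) :
    γ ∈ idealSet t ↔ ∃ (e : ℕ) (he : e ∈ t.dom) (f : ℕ) (β : Fin n → ℕ),
      e ≤ f ∧ β ∈ idealSet (t.child e he) ∧ γ = Fin.cons f β := by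
  cases t; rfl

theorem isIdealTree_child {n : ℕ} (t : NTree (n + 1)) (ht : IsIdealTree t)
    (e : ℕ) (he : e ∈ t.dom) : IsIdealTree (t.child e he) := by
  cases t; exact ht.1 e he

theorem child_mono {n : ℕ} (t : NTree (n + 1)) (ht : IsIdealTree t) {e f : ℕ}
    (he : e ∈ t.dom) (hf : f ∈ t.dom) (hef : e ≤ f) :
    idealSet (t.child e he) ⊆ idealSet (t.child f hf) := by
  cases t with
  | node d hd c =>
    rcases eq_or_lt_of_le hef with h | h
    · subst h; exact subset_rfl
    · exact (ht.2 e f he hf h).subset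

theorem mem_quot_iff {n : ℕ} (t : NTree (n + 1)) (f : ℕ) (β : Fin n → ℕ) :
    β ∈ quotIdeal (idealSet t) f ↔
      ∃ (e : ℕ) (he : e ∈ t.dom), e ≤ f ∧ β ∈ idealSet (t.child e he) := by
  constructor
  · intro h
    rw [quotIdeal, Set.mem_setOf_eq, mem_idealSet_iff] at h
    obtain ⟨e, he, f', β', hef, hβ, heq⟩ := h
    obtain ⟨h1, h2⟩ := Fin.cons_injective2 heq
    subst h1; subst h2
    exact ⟨e, he, hef, hβ⟩
  · rintro ⟨e, he, hef, hβ⟩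
    rw [quotIdeal, Set.mem_setOf_eq, mem_idealSet_iff]
    exact ⟨e, he, f, β, hef, hβ, rfl⟩

theorem quot_mono {n : ℕ} (t : NTree (n + 1)) {f g : ℕ} (hfg : f ≤ g) :
    quotIdeal (idealSet t) f ⊆ quotIdeal (idealSet t) g := by
  intro β hβ
  rw [mem_quot_iff] at hβ ⊢
  obtain ⟨e, he, hef, hβ⟩ := hβ
  exact ⟨e, he, le_trans hef hfg, hβ⟩

theorem quot_child {n : ℕ} (t : NTree (n + 1)) (ht : IsIdealTree t)
    (e : ℕ) (he : e ∈ t.dom) : quotIdeal (idealSet t) e = idealSet (t.child e he) := by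
  ext β
  rw [mem_quot_iff]
  constructor
  · rintro ⟨e', he', h1, h2⟩
    exact child_mono t ht he' he h1 h2
  · intro h
    exact ⟨e, he, le_refl e, h⟩

theorem quot_nonempty_iff {n : ℕ} (t : NTree (n + 1)) (f : ℕ) :
    (quotIdeal (idealSet t) f).Nonempty ↔ ∃ e ∈ t.dom, e ≤ f := by
  constructor
  · rintro ⟨β, hβ⟩
    rw [mem_quot_iff] at hβ
    obtain ⟨e, he, hef, -⟩ := hβ
    exact ⟨e, he, hef⟩
  · rintro ⟨e, he, hef⟩
    obtain ⟨β, hβ⟩ := idealSet_nonempty_s19 (t.child e he)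
    exact ⟨β, (mem_quot_iff t f β).mpr ⟨e, he, hef, hβ⟩⟩

theorem zero_mem_dom_iff {n : ℕ} (t : NTree (n + 1)) :
    0 ∈ t.dom ↔ (quotIdeal (idealSet t) 0).Nonempty := by
  rw [quot_nonempty_iff]
  constructor
  · intro h; exact ⟨0, h, le_refl 0⟩
  · rintro ⟨e, he, he0⟩
    rwa [Nat.le_zero.mp he0] at he

theorem succ_mem_dom_iff {n : ℕ} (t : NTree (n + 1)) (ht : IsIdealTree t) (m : ℕ) :
    (m + 1) ∈ t.dom ↔
      quotIdeal (idealSet t) m ≠ quotIdeal (idealSet t) (m + 1) := by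
  constructor
  · intro hmem heq
    by_cases hne : (quotIdeal (idealSet t) m).Nonempty
    · obtain ⟨e0, he0, he0m⟩ := (quot_nonempty_iff t m).mp hne
      set E := t.dom.filter (· ≤ m) with hE
      have hEne : E.Nonempty := ⟨e0, Finset.mem_filter.mpr ⟨he0, by simpa using he0m⟩⟩
      set es := E.max' hEne with hes
      have hesE : es ∈ E := E.max'_mem hEne
      have hesdom : es ∈ t.dom := (Finset.mem_filter.mp hesE).1
      have hesm : es ≤ m := by simpa using (Finset.mem_filter.mp hesE).2
      have hsub : quotIdeal (idealSet t) m ⊆ idealSet (t.child es hesdom) := by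
        intro β hβ
        rw [mem_quot_iff] at hβ
        obtain ⟨e, he, hem, hβ⟩ := hβ
        have heE : e ∈ E := Finset.mem_filter.mpr ⟨he, by simpa using hem⟩
        exact child_mono t ht he hesdom (E.le_max' e heE) hβ
      have hss : idealSet (t.child es hesdom) ⊂ idealSet (t.child (m + 1) hmem) := by
        cases t; exact ht.2 _ _ hesdom hmem (by omega)
      obtain ⟨γ, hγ1, hγ2⟩ := Set.exists_of_ssubset hss
      have : γ ∈ quotIdeal (idealSet t) (m + 1) := by
        rw [quot_child t ht (m + 1) hmem]; exact hγ1
      rw [← heq] at this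
      exact hγ2 (hsub this)
    · rw [Set.not_nonempty_iff_eq_empty] at hne
      have : (quotIdeal (idealSet t) (m + 1)).Nonempty := by
        rw [quot_child t ht (m + 1) hmem]
        exact idealSet_nonempty_s19 _
      rw [← heq, hne] at this
      exact this.ne_empty rfl
  · intro hne
    by_contra hmem
    apply hne
    apply Set.Subset.antisymm (quot_mono t (Nat.le_succ m))
    intro β hβ
    rw [mem_quot_iff] at hβ ⊢
    obtain ⟨e, he, hem, hβ⟩ := hβ
    have : e ≤ m := by
      rcases Nat.lt_or_ge e (m + 1) with h | h
      · omega
      · exfalso; apply hmem; have : e = m + 1 := by omega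
        subst this; exact he
    exact ⟨e, he, this, hβ⟩

theorem node_ext : ∀ {n : ℕ} (s t : NTree (n + 1)), s.dom = t.dom →
    (∀ (e : ℕ) (hes : e ∈ s.dom) (het : e ∈ t.dom), s.child e hes = t.child e het) →
    s = t
  | _, node ds hds cs, node dt hdt ct, hd, hc => by
      have hd' : ds = dt := hd
      subst hd' 
      have h1 : hds = hdt := Subsingleton.elim _ _
      subst h1
      have : cs = ct := funext fun e => funext fun he => hc e he he
      rw [this]

theorem idealTree_unique : ∀ {n : ℕ} (s t : NTree n), IsIdealTree s → IsIdealTree t →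
    idealSet s = idealSet t → s = t := by
  intro n
  induction n with
  | zero => intro s t _ _ _; cases s; cases t; rfl
  | succ n ih =>
    intro s t hs ht hI
    have hdom : s.dom = t.dom := by
      ext e
      cases e with
      | zero => rw [zero_mem_dom_iff, zero_mem_dom_iff, hI]
      | succ m => rw [succ_mem_dom_iff s hs, succ_mem_dom_iff t ht, hI]
    apply node_ext s t hdom
    intro e hes het
    apply ih _ _ (isIdealTree_child s hs e hes) (isIdealTree_child t ht e het)
    rw [← quot_child s hs e hes, ← quot_child t ht e het, hI]

/-- The set `{α : ℕ^n | d ≤ ∑ α}`. -/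
def topSet (n d : ℕ) : Set (Fin n → ℕ) := {α | d ≤ ∑ i, α i}

/-- The canonical ideal tree of `topSet n d` (for `n ≥ 1`). -/
def canonT : (n : ℕ) → ℕ → NTree n
  | 0, _ => leaf
  | 1, d => node {d} (Finset.singleton_nonempty _) fun _ _ => leaf
  | (n + 2), d => node (Finset.range (d + 1))
      (Finset.nonempty_range_iff.mpr (Nat.succ_ne_zero d))
      fun e _ => canonT (n + 1) (d - e)

theorem exists_sum_eq (n d : ℕ) : ∃ α : Fin (n + 1) → ℕ, ∑ i, α i = d :=
  ⟨Fin.cons d 0, by simp [Fin.sum_cons]⟩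

theorem topSet_ssubset {n a b : ℕ} (h : b < a) : topSet (n + 1) a ⊂ topSet (n + 1) b := by
  constructor
  · intro α hα; exact le_trans h.le hα
  · intro hcon
    obtain ⟨α, hα⟩ := exists_sum_eq n b
    have h1 : α ∈ topSet (n + 1) b := le_of_eq hα.symm
    have h2 := hcon h1
    rw [topSet, Set.mem_setOf_eq, hα] at h2
    omega

theorem idealSet_canonT : ∀ (n d : ℕ), idealSet (canonT (n + 1) d) = topSet (n + 1) d
  | 0, d => by
      ext γ
      show (∃ (e : ℕ) (_ : e ∈ ({d} : Finset ℕ)) (f : ℕ) (β : Fin 0 → ℕ),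
        e ≤ f ∧ β ∈ idealSet leaf ∧ γ = Fin.cons f β) ↔ d ≤ ∑ i, γ i
      rw [Fin.sum_univ_one]
      constructor
      · rintro ⟨e, he, f, β, hef, -, rfl⟩
        simp only [Finset.mem_singleton] at he
        subst he
        simpa using hef
      · intro h
        exact ⟨d, Finset.mem_singleton_self d, γ 0, Fin.tail γ, h, Set.mem_univ _,
          (Fin.cons_self_tail γ).symm⟩
  | (n + 1), d => by
      ext γ
      show (∃ (e : ℕ) (_ : e ∈ Finset.range (d + 1)) (f : ℕ) (β : Fin (n + 1) → ℕ),
        e ≤ f ∧ β ∈ idealSet (canonT (n + 1) (d - e)) ∧ γ = Fin.cons f β) ↔ d ≤ ∑ i, γ i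
      constructor
      · rintro ⟨e, he, f, β, hef, hβ, rfl⟩
        rw [idealSet_canonT n (d - e)] at hβ
        rw [Finset.mem_range] at he
        rw [Fin.sum_cons]
        have : d - e ≤ ∑ i, β i := hβ
        omega
      · intro h
        have hsum : γ 0 + ∑ i, Fin.tail γ i = ∑ i, γ i := (Fin.sum_univ_succ γ).symm
        refine ⟨min (γ 0) d, Finset.mem_range.mpr (by omega), γ 0, Fin.tail γ,
          Nat.min_le_left _ _, ?_, (Fin.cons_self_tail γ).symm⟩
        rw [idealSet_canonT n (d - min (γ 0) d)]
        show d - min (γ 0) d ≤ ∑ i, Fin.tail γ i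
        omega

theorem isIdealTree_canonT : ∀ (n d : ℕ), IsIdealTree (canonT n d)
  | 0, _ => trivial
  | 1, d => by
      refine ⟨fun _ _ => trivial, ?_⟩
      intro e f he hf hef
      simp only [Finset.mem_singleton] at he hf
      omega
  | (n + 2), d => by
      refine ⟨fun e _ => isIdealTree_canonT (n + 1) (d - e), ?_⟩
      intro e f he hf hef
      rw [Finset.mem_range] at he hf
      show idealSet (canonT (n + 1) (d - e)) ⊂ idealSet (canonT (n + 1) (d - f))
      rw [idealSet_canonT, idealSet_canonT]
      exact topSet_ssubset (by omega)

theorem subAt_canonT : ∀ (k n d : ℕ), 1 ≤ n → k ≤ n →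
    subAt (canonT n d) k ⊆
      (fun m => (⟨n - k, canonT (n - k) m⟩ : (m : ℕ) × NTree m)) '' Set.Iic d := by
  intro k
  induction k with
  | zero =>
    intro n d hn _ p hp
    simp only [subAt, Set.mem_singleton_iff] at hp
    exact ⟨d, Set.mem_Iic.mpr (le_refl d), by rw [hp]; rfl⟩
  | succ k ih =>
    intro n d hn hk
    match n, hn, hk with
    | 1, _, hk =>
      have hk0 : k = 0 := by omega
      subst hk0
      intro p hp
      simp only [canonT, subAt, Set.mem_iUnion] at hp
      obtain ⟨e, he, hp⟩ := hp
      simp only [subAt, Set.mem_singleton_iff] at hp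
      exact ⟨0, Set.mem_Iic.mpr (Nat.zero_le d), by rw [hp]; rfl⟩
    | (m + 2), _, hk =>
      intro p hp
      simp only [canonT, subAt, Set.mem_iUnion] at hp
      obtain ⟨e, he, hp⟩ := hp
      rw [Finset.mem_range] at he
      have := ih (m + 1) (d - e) (by omega) (by omega) hp
      obtain ⟨m', hm', hpe⟩ := this
      refine ⟨m', Set.mem_Iic.mpr (le_trans (Set.mem_Iic.mp hm') (Nat.sub_le d e)), ?_⟩
      have hsub : m + 2 - (k + 1) = m + 1 - k := by omega
      rw [hsub]
      exact hpe

end NTree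

theorem exists_le_sum : ∀ {n : ℕ} (a : Fin n → ℕ) (d : ℕ), d ≤ ∑ i, a i →
    ∃ x : Fin n → ℕ, (∀ i, x i ≤ a i) ∧ ∑ i, x i = d
  | 0, a, d, h => ⟨a, fun i => le_refl _, by
      simp only [Finset.univ_eq_empty, Finset.sum_empty] at h ⊢; omega⟩
  | n + 1, a, d, h => by
      rw [Fin.sum_univ_succ] at h
      by_cases hd : d ≤ a 0
      · refine ⟨Fin.cons d 0, ?_, by simp [Fin.sum_cons]⟩
        intro i
        refine Fin.cases ?_ ?_ i
        · simpa using hd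
        · intro j; simp
      · have htail : ∑ i, Fin.tail a i = ∑ i : Fin n, a i.succ := rfl
        have hta : d - a 0 ≤ ∑ i, Fin.tail a i := by rw [htail]; omega
        obtain ⟨x, hx1, hx2⟩ := exists_le_sum (Fin.tail a) (d - a 0) hta
        refine ⟨Fin.cons (a 0) x, ?_, ?_⟩
        · intro i
          refine Fin.cases ?_ ?_ i
          · simp
          · intro j; simpa [Fin.tail] using hx1 j
        · rw [Fin.sum_cons, hx2]; omega

/-- The multiset/stars-and-bars count. -/
theorem ncard_sum_eq_d {n d : ℕ} (hn : 1 ≤ n) :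
    {α : Fin n → ℕ | ∑ i, α i = d}.ncard = (d + n - 1).choose (n - 1) := by
  have c1 : n + d - 1 = d + n - 1 := by omega
  have c2 : d ≤ d + n - 1 := by omega
  have c3 : d + n - 1 - d = n - 1 := by omega
  classical
  have e : {α : Fin n → ℕ // ∑ i, α i = d} ≃ Sym (Fin n) d :=
    Equiv.subtypeEquiv (Finsupp.equivFunOnFinite.symm.trans
      ⟨Finsupp.toMultiset, Multiset.toFinsupp, Finsupp.toMultiset_toFinsupp,
        Multiset.toFinsupp_toMultiset⟩) (by
      intro a
      show _ ↔ Multiset.card (Finsupp.toMultiset (Finsupp.equivFunOnFinite.symm a)) = d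
      rw [Finsupp.card_toMultiset, Finsupp.sum_fintype _ _ (fun _ => rfl)]
      simp)
  have h1 : {α : Fin n → ℕ | ∑ i, α i = d}.ncard = Nat.card (Sym (Fin n) d) := by
    rw [← Nat.card_coe_set_eq]
    exact Nat.card_congr e
  rw [h1, Nat.card_eq_fintype_card, Sym.card_sym_eq_choose, Fintype.card_fin, c1,
    ← Nat.choose_symm c2, c3]


open NTree in
/-- the ideal `I_{n,d} = {α ∈ ℕ^n : α_1 + ⋯ + α_n ≥ d}`
(n ≥ 1) is minimally generated by exactly `binom(d+n-1, n-1)` monomials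
(namely the vectors of coordinate sum `d`), while the width of its ideal tree
is at most `d + 1`: for every `0 ≤ k ≤ n`, the number of pairwise distinct
subtrees at depth `k` is at most `d + 1`. -/
theorem statement19 {n : ℕ} (hn : 1 ≤ n) (d : ℕ)
    (t : NTree n) (ht : IsIdealTree t)
    (hIt : idealSet t = {α : Fin n → ℕ | d ≤ ∑ i, α i}) :
    ({α : Fin n → ℕ | ∑ i, α i = d} + Set.univ
        = {α : Fin n → ℕ | d ≤ ∑ i, α i}) ∧
    (∀ E : Set (Fin n → ℕ), E ⊂ {α : Fin n → ℕ | ∑ i, α i = d} →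
      E + Set.univ ≠ {α : Fin n → ℕ | d ≤ ∑ i, α i}) ∧
    {α : Fin n → ℕ | ∑ i, α i = d}.ncard = (d + n - 1).choose (n - 1) ∧
    width t ≤ d + 1 ∧
    (∀ k : ℕ, k ≤ n → (subAt t k).ncard ≤ d + 1) := by
  obtain ⟨m, rfl⟩ : ∃ m, n = m + 1 := ⟨n - 1, by omega⟩
  have hgen : {α : Fin (m + 1) → ℕ | ∑ i, α i = d} + Set.univ
      = {α : Fin (m + 1) → ℕ | d ≤ ∑ i, α i} := by
    ext α
    rw [Set.mem_add]
    constructor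
    · rintro ⟨x, hx, y, -, rfl⟩
      have hsum : ∑ i, (x + y) i = ∑ i, x i + ∑ i, y i := by
        simp [Finset.sum_add_distrib]
      rw [Set.mem_setOf_eq] at hx ⊢
      rw [hsum, hx]
      exact Nat.le_add_right _ _
    · intro hα
      rw [Set.mem_setOf_eq] at hα
      obtain ⟨x, hx1, hx2⟩ := exists_le_sum α d hα
      refine ⟨x, hx2, fun i => α i - x i, Set.mem_univ _, funext fun i => ?_⟩
      have := hx1 i
      show x i + (α i - x i) = α i
      omega
  have hteq : t = canonT (m + 1) d :=
    idealTree_unique t _ ht (isIdealTree_canonT (m + 1) d)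
      (by rw [hIt, idealSet_canonT]; rfl)
  have h5 : ∀ k : ℕ, k ≤ m + 1 → (subAt t k).ncard ≤ d + 1 := by
    intro k hk
    rw [hteq]
    have hsub := subAt_canonT k (m + 1) d (by omega) hk
    calc (subAt (canonT (m + 1) d) k).ncard
        ≤ ((fun m' => (⟨m + 1 - k, canonT (m + 1 - k) m'⟩ : (j : ℕ) × NTree j)) ''
            Set.Iic d).ncard :=
          Set.ncard_le_ncard hsub ((Set.finite_Iic d).image _)
      _ ≤ (Set.Iic d).ncard := Set.ncard_image_le (Set.finite_Iic d)
      _ = d + 1 := by rw [← Finset.coe_Iic, Set.ncard_coe_finset, Nat.card_Iic]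
  refine ⟨hgen, ?_, ncard_sum_eq_d hn, ?_, h5⟩
  · intro E hE heq
    obtain ⟨α, hαS, hαE⟩ := Set.exists_of_ssubset hE
    have hαI : α ∈ E + Set.univ := by
      rw [heq, Set.mem_setOf_eq]
      rw [Set.mem_setOf_eq] at hαS
      omega
    rw [Set.mem_add] at hαI
    obtain ⟨x, hx, y, -, hxy⟩ := hαI
    have hxS : ∑ i, x i = d := hE.subset hx
    have hsum : ∑ i, x i + ∑ i, y i = ∑ i, α i := by
      rw [← hxy]; simp [Finset.sum_add_distrib]
    rw [Set.mem_setOf_eq] at hαS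
    have hy0 : ∑ i, y i = 0 := by omega
    have hy : ∀ i, y i = 0 := by
      intro i
      have := Finset.sum_eq_zero_iff.mp hy0 i (Finset.mem_univ i)
      exact this
    have : α = x := by
      rw [← hxy]; funext i; show x i + y i = x i
      have := hy i
      omega
    rw [this] at hαE
    exact hαE hx
  · apply Finset.sup_le
    intro k hk
    exact h5 k (Nat.lt_succ_iff.mp (Finset.mem_range.mp hk))
end
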